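/- arXiv:2503.13035 — 4 statements merged into one kernel-verified Lean document; each statement's English description precedes it below -/
import Mathlib

section
/- Let k > 1 be an integer and let W : ℝ → ℝ be continuous, nonnegative and satisfy (H2). Then there exists a constant q* > 0, independent of the interval, such that for every bounded open interval (a,b) with a < b, every real number q < q*, and every function u : ℝ → ℝ of class C^k, one has q · ∫_a^b |u^{(k-1)}(t)|² dt ≤ (b-a)^{-2(k-1)} · ∫_a^b W(u(t)) dt + (b-a)² · ∫_a^b |u^{(k)}(t)|² dt. -/
/-!
Write `L = b - a`. The interpolation inequality
`∫ (f^(j))² ≤ L^(2r) ∫ (f^(j+r))² + C L^(-2j) ∫ f²` holds on every interval with a constant `C`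
independent of the interval. For `r = 1` and `j = 1` it follows from a mean value argument for `f'`
between two points of the outer thirds where `f` is small; cutting `[a, b]` into `N` equal pieces
moves a factor `N²` from one weight to the other, which lets the induction on `j` absorb the
lower-order term, and iterating in `r` gives the general case.

If `u` stays on one side of `-1/2` or of `1/2` on `[a, b]`, then `(u ∓ 1)² ≤ 9 W(u)` there, and
interpolation applied to `u ∓ 1` gives the bound. Otherwise `u` crosses from `-1/2` to `1/2` inside
a subinterval on which `W(u) ≥ 1/4`, so `1 ≤ 4 ∫ W(u) ∫ u'²`. Together with `u² ≤ 2 W(u) + 2` and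
interpolation between `u`, `u'` and `u^(k)`, this bounds `L^(1 - 2(k-1))` by a multiple of the
right-hand side, which pays for the term `2 L` in `∫ u² ≤ 2 ∫ W(u) + 2 L`.
-/

open MeasureTheory Set

lemma exists_mul_le_integral {f : ℝ → ℝ} (hf : Continuous f) {a b : ℝ} (hab : a < b) :
    ∃ x ∈ Icc a b, f x * (b - a) ≤ ∫ t in a..b, f t := by
  obtain ⟨x, hx, hmin⟩ :=
    isCompact_Icc.exists_isMinOn (nonempty_Icc.2 hab.le) hf.continuousOn
  refine ⟨x, hx, ?_⟩
  simpa [mul_comm] using intervalIntegral.integral_mono_on (μ := volume) hab.le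
    intervalIntegrable_const (hf.intervalIntegrable a b) fun t ht => hmin ht

lemma sq_integral_le_mul_integral_sq {g : ℝ → ℝ} (hg : Continuous g) {a b : ℝ} (hab : a ≤ b) :
    (∫ t in a..b, g t) ^ 2 ≤ (b - a) * ∫ t in a..b, g t ^ 2 := by
  rcases hab.eq_or_lt with rfl | hab
  · simp
  set c := (∫ t in a..b, g t) / (b - a)
  have hc : c * (b - a) = ∫ t in a..b, g t := div_mul_cancel₀ _ (sub_pos.2 hab).ne'
  -- expanding `0 ≤ ∫ (g - c)²` with `c` the mean of `g`
  have hvar : 0 ≤ ∫ t in a..b, (g t ^ 2 - 2 * c * g t + c ^ 2) := by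
    refine intervalIntegral.integral_nonneg hab.le fun t _ => ?_
    nlinarith [sq_nonneg (g t - c)]
  have hg2 : IntervalIntegrable (fun t => g t ^ 2) volume a b := (hg.pow 2).intervalIntegrable a b
  have hg1 := (hg.intervalIntegrable (μ := volume) a b).const_mul (2 * c)
  rw [intervalIntegral.integral_add (hg2.sub hg1) intervalIntegrable_const,
    intervalIntegral.integral_sub hg2 hg1, intervalIntegral.integral_const_mul,
    intervalIntegral.integral_const, smul_eq_mul] at hvar
  nlinarith

lemma sq_sub_le_mul_integral_deriv_sq {f : ℝ → ℝ} (hf : ContDiff ℝ 1 f) {a b x y : ℝ}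
    (hx : x ∈ Icc a b) (hy : y ∈ Icc a b) :
    (f y - f x) ^ 2 ≤ (b - a) * ∫ t in a..b, deriv f t ^ 2 := by
  wlog hxy : x ≤ y generalizing x y
  · rw [← neg_sub, neg_sq]
    exact this hy hx (le_of_not_ge hxy)
  have hf' := hf.continuous_deriv_one
  have hftc : ∫ t in x..y, deriv f t = f y - f x :=
    intervalIntegral.integral_deriv_eq_sub (fun t _ => hf.differentiable one_ne_zero t)
      (hf'.intervalIntegrable x y)
  have hmono : ∫ t in x..y, deriv f t ^ 2 ≤ ∫ t in a..b, deriv f t ^ 2 :=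
    intervalIntegral.integral_mono_interval hx.1 hxy hy.2
      (Filter.Eventually.of_forall fun t => sq_nonneg _) ((hf'.pow 2).intervalIntegrable a b)
  calc (f y - f x) ^ 2 ≤ (y - x) * ∫ t in x..y, deriv f t ^ 2 :=
        hftc ▸ sq_integral_le_mul_integral_sq hf' hxy
    _ ≤ (b - a) * ∫ t in a..b, deriv f t ^ 2 := by
        refine mul_le_mul (by linarith [hx.1, hy.2]) hmono ?_ (by linarith [hx.1, hy.2])
        exact intervalIntegral.integral_nonneg hxy fun t _ => sq_nonneg _

lemma exists_deriv_sq_mul_le {f : ℝ → ℝ} (hf : Differentiable ℝ f) {a b : ℝ} (hab : a < b) :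
    ∃ ξ ∈ Icc a b, deriv f ξ ^ 2 * (b - a) ^ 3 ≤ 108 * ∫ t in a..b, f t ^ 2 := by
  set I := ∫ t in a..b, f t ^ 2
  have hsmall : ∀ c d, a ≤ c → c < d → d ≤ b → ∃ x ∈ Icc c d, f x ^ 2 * (d - c) ≤ I := by
    intro c d hac hcd hdb
    obtain ⟨x, hx, hle⟩ := exists_mul_le_integral (hf.continuous.pow 2) hcd
    refine ⟨x, hx, hle.trans ?_⟩
    exact intervalIntegral.integral_mono_interval hac hcd.le hdb
      (Filter.Eventually.of_forall fun t => sq_nonneg _)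
      ((hf.continuous.pow 2).intervalIntegrable a b)
  -- `f` is small somewhere in each outer third; apply the mean value theorem between such points
  obtain ⟨x, hx, hfx⟩ := hsmall a (a + (b - a) / 3) le_rfl (by linarith) (by linarith)
  obtain ⟨y, hy, hfy⟩ := hsmall (b - (b - a) / 3) b (by linarith) (by linarith) le_rfl
  have hxy : (b - a) / 3 ≤ y - x := by linarith [hx.2, hy.1]
  obtain ⟨ξ, hξ, hslope⟩ := exists_deriv_eq_slope f (show x < y by linarith)
    hf.continuous.continuousOn fun t _ => (hf t).differentiableWithinAt
  refine ⟨ξ, ⟨by linarith [hx.1, hξ.1], by linarith [hξ.2, hy.2]⟩, ?_⟩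
  have hmvt : deriv f ξ * (y - x) = f y - f x := by
    rw [hslope]; field_simp [(by linarith : (0 : ℝ) < y - x).ne']
  have hL : 0 < b - a := sub_pos.2 hab
  have h1 : deriv f ξ ^ 2 * ((b - a) / 3) ^ 2 ≤ 2 * f x ^ 2 + 2 * f y ^ 2 := by
    calc deriv f ξ ^ 2 * ((b - a) / 3) ^ 2 ≤ (deriv f ξ * (y - x)) ^ 2 := by
          rw [mul_pow]; gcongr
      _ ≤ 2 * f x ^ 2 + 2 * f y ^ 2 := by rw [hmvt]; nlinarith [sq_nonneg (f x + f y)]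
  have h2 : (2 * f x ^ 2 + 2 * f y ^ 2) * ((b - a) / 3) ≤ 4 * I := by
    simp only [add_sub_cancel_left, sub_sub_cancel] at hfx hfy
    linarith
  nlinarith [mul_le_mul_of_nonneg_right h1 (by positivity : (0 : ℝ) ≤ (b - a) / 3)]

lemma integral_deriv_sq_le {f : ℝ → ℝ} (hf : ContDiff ℝ 2 f) {a b : ℝ} (hab : a < b) :
    ∫ t in a..b, deriv f t ^ 2 ≤
      2 * (b - a) ^ 2 * (∫ t in a..b, deriv (deriv f) t ^ 2) +
        216 * ((b - a) ^ 2)⁻¹ * ∫ t in a..b, f t ^ 2 := by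
  obtain ⟨hdiff, -, hf'⟩ := (contDiff_succ_iff_deriv (n := 1)).1 hf
  obtain ⟨ξ, hξ, hξbound⟩ := exists_deriv_sq_mul_le hdiff hab
  have hL : 0 < b - a := sub_pos.2 hab
  set J := ∫ t in a..b, deriv (deriv f) t ^ 2
  have hpoint : ∀ t ∈ Icc a b, deriv f t ^ 2 ≤ 2 * deriv f ξ ^ 2 + 2 * ((b - a) * J) := by
    intro t ht
    nlinarith [sq_sub_le_mul_integral_deriv_sq hf' hξ ht, sq_nonneg (deriv f t - 2 * deriv f ξ)]
  have hint := intervalIntegral.integral_mono_on (μ := volume) hab.le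
    ((hf'.continuous.pow 2).intervalIntegrable a b) intervalIntegrable_const hpoint
  simp only [intervalIntegral.integral_const, smul_eq_mul, Pi.pow_apply] at hint
  have hξ' : deriv f ξ ^ 2 * (b - a) ≤ 108 * ((b - a) ^ 2)⁻¹ * ∫ t in a..b, f t ^ 2 := by
    calc deriv f ξ ^ 2 * (b - a) = deriv f ξ ^ 2 * (b - a) ^ 3 * ((b - a) ^ 2)⁻¹ := by
          field_simp
      _ ≤ (108 * ∫ t in a..b, f t ^ 2) * ((b - a) ^ 2)⁻¹ := by gcongr
      _ = _ := by ring
  calc ∫ t in a..b, deriv f t ^ 2 ≤ (b - a) * (2 * deriv f ξ ^ 2 + 2 * ((b - a) * J)) := hint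
    _ = 2 * (b - a) ^ 2 * J + 2 * (deriv f ξ ^ 2 * (b - a)) := by ring
    _ ≤ _ := by linarith

lemma integral_le_of_subdivision {F G H : ℝ → ℝ} (hF : Continuous F) (hG : Continuous G)
    (hH : Continuous H) {K C : ℝ} {p q : ℕ}
    (h : ∀ a b : ℝ, a < b → ∫ t in a..b, F t ≤
      K * (b - a) ^ p * (∫ t in a..b, G t) + C * ((b - a) ^ q)⁻¹ * ∫ t in a..b, H t)
    {N : ℕ} (hN : 0 < N) {a b : ℝ} (hab : a < b) :
    ∫ t in a..b, F t ≤
      K / N ^ p * (b - a) ^ p * (∫ t in a..b, G t) +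
        C * N ^ q * ((b - a) ^ q)⁻¹ * ∫ t in a..b, H t := by
  have hN' : (0 : ℝ) < N := Nat.cast_pos.2 hN
  set ℓ := (b - a) / N with hℓ
  have hℓ0 : 0 < ℓ := div_pos (sub_pos.2 hab) hN'
  set c : ℕ → ℝ := fun i => a + i * ℓ
  have hc : ∀ i, c (i + 1) - c i = ℓ := fun i => by simp only [c]; push_cast; ring
  have hsum : ∀ g : ℝ → ℝ, Continuous g →
      ∑ i ∈ Finset.range N, ∫ t in c i..c (i + 1), g t = ∫ t in a..b, g t := by
    intro g hg
    have hcN : c N = b := by simp only [c, hℓ]; field_simp; ring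
    rw [intervalIntegral.sum_integral_adjacent_intervals fun i _ => hg.intervalIntegrable _ _, hcN]
    simp [c]
  have hK : K / N ^ p * (b - a) ^ p = K * ℓ ^ p := by rw [hℓ, div_pow]; ring
  have hC : C * N ^ q * ((b - a) ^ q)⁻¹ = C * (ℓ ^ q)⁻¹ := by
    rw [hℓ, div_pow, inv_div]; ring
  rw [hK, hC, ← hsum F hF, ← hsum G hG, ← hsum H hH, Finset.mul_sum, Finset.mul_sum,
    ← Finset.sum_add_distrib]
  refine Finset.sum_le_sum fun i _ => ?_
  simpa only [hc i] using h (c i) (c (i + 1)) (by linarith [hc i])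

def IsInterpolationConst (j r : ℕ) (C : ℝ) : Prop :=
  ∀ f : ℝ → ℝ, ContDiff ℝ (j + r : ℕ) f → ∀ a b : ℝ, a < b →
    ∫ t in a..b, iteratedDeriv j f t ^ 2 ≤
      (b - a) ^ (2 * r) * (∫ t in a..b, iteratedDeriv (j + r) f t ^ 2) +
        C * ((b - a) ^ (2 * j))⁻¹ * ∫ t in a..b, f t ^ 2

lemma isInterpolationConst_zero_one : IsInterpolationConst 0 1 1 := by
  intro f _ a b hab
  have : 0 ≤ (b - a) ^ 2 * ∫ t in a..b, iteratedDeriv 1 f t ^ 2 :=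
    mul_nonneg (sq_nonneg _) (intervalIntegral.integral_nonneg hab.le fun t _ => sq_nonneg _)
  simpa using this

lemma IsInterpolationConst.succ_one {m : ℕ} {C : ℝ} (hC0 : 0 ≤ C)
    (hC : IsInterpolationConst m 1 C) :
    IsInterpolationConst (m + 1) 1 (1728 * 42 ^ (2 * m) * C) := by
  intro f hf a b hab
  have hg : ContDiff ℝ 2 (iteratedDeriv m f) := by
    rw [iteratedDeriv_eq_iterate]
    exact ContDiff.iterate_deriv' 2 m (by rwa [show 2 + m = m + 1 + 1 by omega])
  have hcont : ∀ i ≤ m + 2, Continuous (fun t => iteratedDeriv i f t ^ 2) := fun i hi =>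
    (hf.continuous_iteratedDeriv i (by exact_mod_cast hi)).pow 2
  have hstep := integral_le_of_subdivision (N := 2) (hcont (m + 1) (by omega))
    (hcont (m + 1 + 1) le_rfl) (hcont m (by omega)) (fun a b hab => by
      simpa only [iteratedDeriv_succ] using integral_deriv_sq_le hg hab) two_pos hab
  have hprev := integral_le_of_subdivision (N := 42) (hcont m (by omega))
    (hcont (m + 1) (by omega)) (hcont 0 (by omega)) (fun a b hab => by
      rw [one_mul]; exact hC f (hf.of_le (by norm_cast; omega)) a b hab) (by norm_num) hab
  rw [iteratedDeriv_zero] at hprev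
  norm_num at hstep hprev
  obtain ⟨P, hP⟩ :
      ∃ P, P = C * 42 ^ (2 * m) * ((b - a) ^ (2 * m))⁻¹ * ∫ t in a..b, f t ^ 2 := ⟨_, rfl⟩
  have hL : 0 < b - a := sub_pos.2 hab
  have hP0 : 0 ≤ P := by
    have := intervalIntegral.integral_nonneg (μ := volume) hab.le fun t _ => sq_nonneg (f t)
    rw [hP]; positivity
  have hs : ((b - a) ^ 2)⁻¹ * (b - a) ^ 2 = 1 := inv_mul_cancel₀ (by positivity)
  have hZ : 0 ≤ (b - a) ^ 2 * ∫ t in a..b, iteratedDeriv (m + 1 + 1) f t ^ 2 :=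
    mul_nonneg (sq_nonneg _) (intervalIntegral.integral_nonneg hab.le fun t _ => sq_nonneg _)
  have hgoal : 1728 * 42 ^ (2 * m) * C * ((b - a) ^ (2 * (m + 1)))⁻¹ * ∫ t in a..b, f t ^ 2 =
      1728 * (((b - a) ^ 2)⁻¹ * P) := by
    rw [hP, show 2 * (m + 1) = 2 + 2 * m by ring, pow_add, mul_inv]; ring
  rw [← hP] at hprev
  rw [hgoal, mul_one]
  -- `216 * 2 ^ 2 / 42 ^ 2 < 1 / 2`, so the `f^(m)`-term is absorbed into the left-hand side
  nlinarith [mul_le_mul_of_nonneg_left hprev (by positivity : (0 : ℝ) ≤ ((b - a) ^ 2)⁻¹),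
    mul_nonneg (by positivity : (0 : ℝ) ≤ ((b - a) ^ 2)⁻¹) hP0]

lemma exists_isInterpolationConst_one (m : ℕ) : ∃ C, 0 ≤ C ∧ IsInterpolationConst m 1 C := by
  induction m with
  | zero => exact ⟨1, zero_le_one, isInterpolationConst_zero_one⟩
  | succ m ih =>
    obtain ⟨C, hC0, hC⟩ := ih
    exact ⟨_, by positivity, hC.succ_one hC0⟩

lemma isInterpolationConst_zero (j : ℕ) : IsInterpolationConst j 0 0 := by
  intro f _ a b _
  simp

lemma IsInterpolationConst.add_one {j r : ℕ} {C C' : ℝ} (h : IsInterpolationConst j r C)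
    (h' : IsInterpolationConst (j + r) 1 C') : IsInterpolationConst j (r + 1) (C + C') := by
  intro f hf a b hab
  rw [← add_assoc] at hf ⊢
  have hL : 0 < b - a := sub_pos.2 hab
  have hprev := h f (hf.of_le (by norm_cast; omega)) a b hab
  have hnext :=
    mul_le_mul_of_nonneg_left (h' f hf a b hab) (by positivity : 0 ≤ (b - a) ^ (2 * r))
  have hpow : (b - a) ^ (2 * r) * ((b - a) ^ (2 * (j + r)))⁻¹ = ((b - a) ^ (2 * j))⁻¹ := by
    rw [mul_add, pow_add, mul_inv, mul_left_comm, mul_inv_cancel₀ (by positivity), mul_one]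
  have hpow' : (b - a) ^ (2 * r) * (b - a) ^ (2 * 1) = (b - a) ^ (2 * (r + 1)) := by
    rw [← pow_add]; ring_nf
  calc ∫ t in a..b, iteratedDeriv j f t ^ 2
      ≤ (b - a) ^ (2 * r) * (∫ t in a..b, iteratedDeriv (j + r) f t ^ 2) +
          C * ((b - a) ^ (2 * j))⁻¹ * ∫ t in a..b, f t ^ 2 := hprev
    _ ≤ (b - a) ^ (2 * r) * ((b - a) ^ (2 * 1) *
          (∫ t in a..b, iteratedDeriv (j + r + 1) f t ^ 2) +
          C' * ((b - a) ^ (2 * (j + r)))⁻¹ * ∫ t in a..b, f t ^ 2) +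
          C * ((b - a) ^ (2 * j))⁻¹ * ∫ t in a..b, f t ^ 2 := add_le_add_left hnext _
    _ = _ := by rw [← hpow', ← hpow]; ring

lemma exists_isInterpolationConst (j r : ℕ) : ∃ C, 0 ≤ C ∧ IsInterpolationConst j r C := by
  induction r with
  | zero => exact ⟨0, le_rfl, isInterpolationConst_zero j⟩
  | succ r ih =>
    obtain ⟨C, hC0, hC⟩ := ih
    obtain ⟨C', hC'0, hC'⟩ := exists_isInterpolationConst_one (j + r)
    exact ⟨C + C', by positivity, hC.add_one hC'⟩

lemma IsInterpolationConst.le_const_add {j r : ℕ} {C : ℝ} (h : IsInterpolationConst j r C)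
    (hj : 0 < j) {f : ℝ → ℝ} (hf : ContDiff ℝ (j + r : ℕ) f) (c : ℝ) {a b : ℝ} (hab : a < b) :
    ∫ t in a..b, iteratedDeriv j f t ^ 2 ≤
      (b - a) ^ (2 * r) * (∫ t in a..b, iteratedDeriv (j + r) f t ^ 2) +
        C * ((b - a) ^ (2 * j))⁻¹ * ∫ t in a..b, (c + f t) ^ 2 := by
  simpa only [iteratedDeriv_const_add hj, iteratedDeriv_const_add (Nat.add_pos_left hj r)]
    using h (fun t => c + f t) (contDiff_const.add hf) a b hab

lemma exists_mem_Icc_eq_and_forall_lt {u : ℝ → ℝ} (hu : Continuous u) {s t c : ℝ} (hst : s ≤ t)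
    (hs : u s ≤ c) (ht : c ≤ u t) : ∃ T ∈ Icc s t, u T = c ∧ ∀ x ∈ Ico s T, u x < c := by
  set E := Icc s t ∩ {x | c ≤ u x}
  have hbdd : BddBelow E := ⟨s, fun x hx => hx.1.1⟩
  have hT : sInf E ∈ E := (isClosed_Icc.inter (isClosed_le continuous_const hu)).csInf_mem
    ⟨t, ⟨hst, le_rfl⟩, ht⟩ hbdd
  refine ⟨sInf E, hT.1, ?_, fun x hx => ?_⟩
  · obtain ⟨y, hy, hyc⟩ := intermediate_value_Icc hT.1.1 hu.continuousOn ⟨hs, hT.2⟩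
    have := csInf_le hbdd ⟨⟨hy.1, hy.2.trans hT.1.2⟩, hyc.ge⟩
    rwa [le_antisymm hy.2 this] at hyc
  · by_contra! h
    exact (csInf_le hbdd ⟨⟨hx.1, hx.2.le.trans hT.1.2⟩, h⟩).not_gt hx.2

lemma exists_mem_Icc_eq_and_forall_gt {u : ℝ → ℝ} (hu : Continuous u) {s t c : ℝ} (hst : s ≤ t)
    (hs : u s ≤ c) (ht : c ≤ u t) : ∃ S ∈ Icc s t, u S = c ∧ ∀ x ∈ Ioc S t, c < u x := by
  obtain ⟨S, hS, hSc, hlt⟩ := exists_mem_Icc_eq_and_forall_lt (u := fun x => -u (-x))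
    (c := -c) (hu.comp continuous_neg).neg (neg_le_neg hst) (by simpa using ht) (by simpa using hs)
  refine ⟨-S, ⟨le_neg.2 hS.2, neg_le.1 hS.1⟩, by linarith, fun x hx => ?_⟩
  have := hlt (-x) ⟨neg_le_neg hx.2, neg_lt.2 hx.1⟩
  simp only [neg_neg] at this
  linarith

lemma exists_mapsTo_Icc {u : ℝ → ℝ} (hu : Continuous u) {s t α β : ℝ} (hst : s ≤ t)
    (hαβ : α ≤ β) (hs : u s ≤ α) (ht : β ≤ u t) :
    ∃ S T, s ≤ S ∧ S ≤ T ∧ T ≤ t ∧ u S = α ∧ u T = β ∧ MapsTo u (Icc S T) (Icc α β) := by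
  obtain ⟨T, hT, huT, hlt⟩ := exists_mem_Icc_eq_and_forall_lt hu hst (hs.trans hαβ) ht
  obtain ⟨S, hS, huS, hgt⟩ := exists_mem_Icc_eq_and_forall_gt hu hT.1 hs (huT ▸ hαβ)
  refine ⟨S, T, hS.1, hS.2, hT.2, huS, huT, fun x hx => ⟨?_, ?_⟩⟩
  · rcases hx.1.eq_or_lt with rfl | hSx
    · exact huS.ge
    · exact (hgt x ⟨hSx, hx.2⟩).le
  · rcases hx.2.eq_or_lt with rfl | hxT
    · exact huT.le
    · exact (hlt x ⟨hS.1.trans hx.1, hxT⟩).le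

lemma exists_transition {u : ℝ → ℝ} (hu : Continuous u) {a b s t : ℝ} (hs : s ∈ Icc a b)
    (ht : t ∈ Icc a b) (hus : u s ≤ -(1 / 2)) (hut : 1 / 2 ≤ u t) :
    ∃ S T, a ≤ S ∧ S ≤ T ∧ T ≤ b ∧ (u T - u S) ^ 2 = 1 ∧ ∀ x ∈ Icc S T, |u x| ≤ 1 / 2 := by
  rcases le_total s t with hst | hts
  · obtain ⟨S, T, hsS, hST, hTt, huS, huT, hmaps⟩ :=
      exists_mapsTo_Icc hu hst (by norm_num) hus hut
    refine ⟨S, T, hs.1.trans hsS, hST, hTt.trans ht.2, by rw [huS, huT]; norm_num,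
      fun x hx => abs_le.2 ⟨(hmaps hx).1, (hmaps hx).2⟩⟩
  · obtain ⟨S, T, htS, hST, hTs, huS, huT, hmaps⟩ :=
      exists_mapsTo_Icc (α := -(1 / 2)) (β := 1 / 2) hu.neg hts (by norm_num) (by simpa using hut)
        (by simpa using neg_le_neg hus)
    refine ⟨S, T, ht.1.trans htS, hST, hTs.trans hs.2, ?_, fun x hx => ?_⟩
    · have : u T - u S = -1 := by simp only [Pi.neg_apply] at huS huT; linarith
      rw [this]; norm_num
    · have := hmaps hx
      simp only [Pi.neg_apply, mem_Icc] at this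
      exact abs_le.2 ⟨by linarith, by linarith⟩

lemma one_le_four_mul_integral_mul_integral_deriv_sq {W u : ℝ → ℝ} (hW : Continuous W)
    (hW0 : ∀ s, 0 ≤ W s) (hW1 : ∀ s, |s| ≤ 1 / 2 → 1 / 4 ≤ W s) (hu : ContDiff ℝ 1 u)
    {a b s t : ℝ} (hs : s ∈ Icc a b) (ht : t ∈ Icc a b) (hus : u s ≤ -(1 / 2)) (hut : 1 / 2 ≤ u t) :
    1 ≤ 4 * (∫ x in a..b, W (u x)) * ∫ x in a..b, deriv u x ^ 2 := by
  obtain ⟨S, T, haS, hST, hTb, hjump, hband⟩ := exists_transition hu.continuous hs ht hus hut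
  have hWu : Continuous fun x => W (u x) := hW.comp hu.continuous
  have hD : 0 ≤ ∫ x in a..b, deriv u x ^ 2 :=
    intervalIntegral.integral_nonneg (haS.trans (hST.trans hTb)) fun x _ => sq_nonneg _
  have hjump' : 1 ≤ (T - S) * ∫ x in a..b, deriv u x ^ 2 := by
    rw [← hjump]
    refine (sq_sub_le_mul_integral_deriv_sq hu ⟨le_rfl, hST⟩ ⟨hST, le_rfl⟩).trans ?_
    refine mul_le_mul_of_nonneg_left ?_ (sub_nonneg.2 hST)
    exact intervalIntegral.integral_mono_interval haS hST hTb
      (Filter.Eventually.of_forall fun x => sq_nonneg _)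
      ((hu.continuous_deriv_one.pow 2).intervalIntegrable a b)
  have hlength : T - S ≤ 4 * ∫ x in a..b, W (u x) := by
    have hquarter := intervalIntegral.integral_mono_on (μ := volume) hST intervalIntegrable_const
      (hWu.intervalIntegrable S T) fun x hx => hW1 (u x) (hband x hx)
    have hsub := intervalIntegral.integral_mono_interval (μ := volume) haS hST hTb
      (Filter.Eventually.of_forall fun x => hW0 (u x)) (hWu.intervalIntegrable a b)
    rw [intervalIntegral.integral_const, smul_eq_mul] at hquarter
    linarith
  nlinarith

lemma sq_sub_one_le_nine_mul_min {s : ℝ} (hs : -(1 / 2) < s) :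
    (s - 1) ^ 2 ≤ 9 * min ((s + 1) ^ 2) ((s - 1) ^ 2) := by
  rcases min_cases ((s + 1) ^ 2) ((s - 1) ^ 2) with ⟨h, -⟩ | ⟨h, -⟩ <;> rw [h] <;> nlinarith

lemma sq_add_one_le_nine_mul_min {s : ℝ} (hs : s < 1 / 2) :
    (s + 1) ^ 2 ≤ 9 * min ((s + 1) ^ 2) ((s - 1) ^ 2) := by
  rcases min_cases ((s + 1) ^ 2) ((s - 1) ^ 2) with ⟨h, -⟩ | ⟨h, -⟩ <;> rw [h] <;> nlinarith

lemma one_fourth_le_min_sq {s : ℝ} (hs : |s| ≤ 1 / 2) :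
    1 / 4 ≤ min ((s + 1) ^ 2) ((s - 1) ^ 2) := by
  rw [abs_le] at hs
  exact le_min (by nlinarith) (by nlinarith)

lemma sq_le_two_mul_min_add_two (s : ℝ) : s ^ 2 ≤ 2 * min ((s + 1) ^ 2) ((s - 1) ^ 2) + 2 := by
  rcases min_cases ((s + 1) ^ 2) ((s - 1) ^ 2) with ⟨h, -⟩ | ⟨h, -⟩ <;> rw [h] <;>
    nlinarith [sq_nonneg (s + 2), sq_nonneg (s - 2)]

lemma nonneg_of_min_sq_le {W : ℝ → ℝ} (hH2 : ∀ s : ℝ, min ((s + 1) ^ 2) ((s - 1) ^ 2) ≤ W s)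
    (s : ℝ) : 0 ≤ W s :=
  (le_min (sq_nonneg _) (sq_nonneg _)).trans (hH2 s)

lemma integral_iteratedDeriv_sq_le_of_one_sided {W u : ℝ → ℝ} (hW : Continuous W)
    (hH2 : ∀ s : ℝ, min ((s + 1) ^ 2) ((s - 1) ^ 2) ≤ W s) {p : ℕ} (hp : 0 < p) {C : ℝ}
    (hC0 : 0 ≤ C) (hC : IsInterpolationConst p 1 C) (hu : ContDiff ℝ (p + 1 : ℕ) u) {a b : ℝ}
    (hab : a < b) (hside : (∀ x ∈ Icc a b, -(1 / 2) < u x) ∨ ∀ x ∈ Icc a b, u x < 1 / 2) :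
    ∫ t in a..b, iteratedDeriv p u t ^ 2 ≤
      (1 + 9 * C) * (((b - a) ^ (2 * p))⁻¹ * (∫ t in a..b, W (u t)) +
        (b - a) ^ 2 * ∫ t in a..b, iteratedDeriv (p + 1) u t ^ 2) := by
  obtain ⟨c, hc⟩ : ∃ c : ℝ, ∀ x ∈ Icc a b, (c + u x) ^ 2 ≤ 9 * W (u x) := by
    rcases hside with h | h
    · refine ⟨-1, fun x hx => ?_⟩
      have := sq_sub_one_le_nine_mul_min (h x hx)
      rw [neg_add_eq_sub]; linarith [hH2 (u x)]
    · refine ⟨1, fun x hx => ?_⟩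
      have := sq_add_one_le_nine_mul_min (h x hx)
      rw [add_comm]; linarith [hH2 (u x)]
  have hint : ∫ t in a..b, (c + u t) ^ 2 ≤ 9 * ∫ t in a..b, W (u t) := by
    rw [← intervalIntegral.integral_const_mul]
    exact intervalIntegral.integral_mono_on hab.le
      (((continuous_const.add hu.continuous).pow 2).intervalIntegrable a b)
      (((hW.comp hu.continuous).intervalIntegrable a b).const_mul 9) hc
  have hE : 0 ≤ ((b - a) ^ (2 * p))⁻¹ * ∫ t in a..b, W (u t) := by
    have := intervalIntegral.integral_nonneg (μ := volume) hab.le fun t _ =>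
      nonneg_of_min_sq_le hH2 (u t)
    have := sub_pos.2 hab
    positivity
  have hB : 0 ≤ (b - a) ^ 2 * ∫ t in a..b, iteratedDeriv (p + 1) u t ^ 2 :=
    mul_nonneg (sq_nonneg _) (intervalIntegral.integral_nonneg hab.le fun t _ => sq_nonneg _)
  calc ∫ t in a..b, iteratedDeriv p u t ^ 2
      ≤ (b - a) ^ (2 * 1) * (∫ t in a..b, iteratedDeriv (p + 1) u t ^ 2) +
          C * ((b - a) ^ (2 * p))⁻¹ * ∫ t in a..b, (c + u t) ^ 2 := hC.le_const_add hp hu c hab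
    _ ≤ (b - a) ^ 2 * (∫ t in a..b, iteratedDeriv (p + 1) u t ^ 2) +
          C * ((b - a) ^ (2 * p))⁻¹ * (9 * ∫ t in a..b, W (u t)) := by
        rw [mul_one]; gcongr
    _ ≤ _ := by nlinarith

lemma integral_sq_le_of_min_sq_le {W u : ℝ → ℝ} (hW : Continuous W)
    (hH2 : ∀ s : ℝ, min ((s + 1) ^ 2) ((s - 1) ^ 2) ≤ W s) (hu : Continuous u) {a b : ℝ}
    (hab : a ≤ b) : ∫ t in a..b, u t ^ 2 ≤ 2 * (∫ t in a..b, W (u t)) + 2 * (b - a) := by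
  have hWu : Continuous fun t => W (u t) := hW.comp hu
  calc ∫ t in a..b, u t ^ 2 ≤ ∫ t in a..b, (2 * W (u t) + 2) :=
        intervalIntegral.integral_mono_on hab ((hu.pow 2).intervalIntegrable a b)
          ((hWu.const_mul 2 |>.add continuous_const).intervalIntegrable a b)
          fun x _ => (sq_le_two_mul_min_add_two (u x)).trans (by linarith [hH2 (u x)])
    _ = 2 * (∫ t in a..b, W (u t)) + 2 * (b - a) := by
        rw [intervalIntegral.integral_add ((hWu.const_mul 2).intervalIntegrable a b)
          intervalIntegrable_const, intervalIntegral.integral_const_mul,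
          intervalIntegral.integral_const, smul_eq_mul, mul_comm (b - a)]

lemma sub_le_of_transition {W u : ℝ → ℝ} (hW : Continuous W)
    (hH2 : ∀ s : ℝ, min ((s + 1) ^ 2) ((s - 1) ^ 2) ≤ W s) {p : ℕ} {C : ℝ} (hC0 : 0 ≤ C)
    (hC : IsInterpolationConst 1 p C) (hu : ContDiff ℝ (p + 1 : ℕ) u) {a b s t : ℝ} (hab : a < b)
    (hs : s ∈ Icc a b) (ht : t ∈ Icc a b) (hus : u s ≤ -(1 / 2)) (hut : 1 / 2 ≤ u t) :
    b - a ≤ 4 * (1 + 4 * C) * ((∫ t in a..b, W (u t)) +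
      (b - a) ^ (2 * p) * ((b - a) ^ 2 * ∫ t in a..b, iteratedDeriv (p + 1) u t ^ 2)) := by
  have hL : 0 < b - a := sub_pos.2 hab
  set E := ∫ t in a..b, W (u t)
  set G := (b - a) ^ (2 * p) * ((b - a) ^ 2 * ∫ t in a..b, iteratedDeriv (p + 1) u t ^ 2)
    with hG_def
  set D := ∫ t in a..b, deriv u t ^ 2
  set F := ∫ t in a..b, u t ^ 2
  have hE : 0 ≤ E := intervalIntegral.integral_nonneg hab.le fun t _ => nonneg_of_min_sq_le hH2 _
  have hG : 0 ≤ G := by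
    have := intervalIntegral.integral_nonneg (μ := volume) hab.le fun t _ =>
      sq_nonneg (iteratedDeriv (p + 1) u t)
    positivity
  have hF : F ≤ 2 * E + 2 * (b - a) := integral_sq_le_of_min_sq_le hW hH2 hu.continuous hab.le
  have hD : (b - a) ^ 2 * D ≤ G + C * F := by
    have := hC u (by rwa [add_comm]) a b hab
    rw [iteratedDeriv_one, add_comm 1 p, mul_one] at this
    calc (b - a) ^ 2 * D
        ≤ (b - a) ^ 2 * ((b - a) ^ (2 * p) * (∫ t in a..b, iteratedDeriv (p + 1) u t ^ 2) +
          C * ((b - a) ^ 2)⁻¹ * F) := by gcongr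
      _ = G + C * F := by rw [hG_def]; field_simp
  have henergy : 1 ≤ 4 * E * D := one_le_four_mul_integral_mul_integral_deriv_sq hW
    (nonneg_of_min_sq_le hH2) (fun s hs => (one_fourth_le_min_sq hs).trans (hH2 s))
    (hu.of_le (by norm_cast; omega)) hs ht hus hut
  rcases le_or_gt (b - a) E with hLE | hEL
  · nlinarith
  · have h1 : (b - a) ^ 2 ≤ 4 * E * ((b - a) ^ 2 * D) := by
      nlinarith [mul_le_mul_of_nonneg_left henergy (sq_nonneg (b - a))]
    have h2 : 4 * E * ((b - a) ^ 2 * D) ≤ 4 * E * (G + C * (2 * E + 2 * (b - a))) := by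
      gcongr; linarith [mul_le_mul_of_nonneg_left hF hC0]
    have h3 : (b - a) * (b - a) ≤ (b - a) * (4 * G + 16 * C * E) := by
      nlinarith [mul_le_mul_of_nonneg_right hEL.le hG,
        mul_le_mul_of_nonneg_left hEL.le (mul_nonneg hC0 hE)]
    nlinarith [le_of_mul_le_mul_left h3 hL]

lemma integral_iteratedDeriv_sq_le_of_transition {W u : ℝ → ℝ} (hW : Continuous W)
    (hH2 : ∀ s : ℝ, min ((s + 1) ^ 2) ((s - 1) ^ 2) ≤ W s) {p : ℕ} {C₁ C₂ : ℝ} (hC₁0 : 0 ≤ C₁)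
    (hC₂0 : 0 ≤ C₂) (hC₁ : IsInterpolationConst p 1 C₁) (hC₂ : IsInterpolationConst 1 p C₂)
    (hu : ContDiff ℝ (p + 1 : ℕ) u) {a b s t : ℝ} (hab : a < b) (hs : s ∈ Icc a b)
    (ht : t ∈ Icc a b) (hus : u s ≤ -(1 / 2)) (hut : 1 / 2 ≤ u t) :
    ∫ t in a..b, iteratedDeriv p u t ^ 2 ≤
      (1 + 2 * C₁ + 8 * C₁ * (1 + 4 * C₂)) * (((b - a) ^ (2 * p))⁻¹ * (∫ t in a..b, W (u t)) +
        (b - a) ^ 2 * ∫ t in a..b, iteratedDeriv (p + 1) u t ^ 2) := by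
  have hL : 0 < b - a := sub_pos.2 hab
  have hlen := sub_le_of_transition hW hH2 hC₂0 hC₂ hu hab hs ht hus hut
  have hF := integral_sq_le_of_min_sq_le hW hH2 hu.continuous hab.le
  have hA := hC₁ u hu a b hab
  rw [mul_one] at hA
  set E := ∫ t in a..b, W (u t)
  set B := ∫ t in a..b, iteratedDeriv (p + 1) u t ^ 2
  set P := ((b - a) ^ (2 * p))⁻¹
  have hE : 0 ≤ E := intervalIntegral.integral_nonneg hab.le fun t _ => nonneg_of_min_sq_le hH2 _
  have hB : 0 ≤ B := intervalIntegral.integral_nonneg hab.le fun t _ => sq_nonneg _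
  have hP : 0 ≤ P := by positivity
  have hPG : P * ((b - a) ^ (2 * p) * ((b - a) ^ 2 * B)) = (b - a) ^ 2 * B :=
    inv_mul_cancel_left₀ (by positivity) _
  have hlen' : P * (b - a) ≤ 4 * (1 + 4 * C₂) * (P * E + (b - a) ^ 2 * B) := by
    rw [← hPG]; nlinarith [mul_le_mul_of_nonneg_left hlen hP]
  nlinarith [mul_le_mul_of_nonneg_left hF (mul_nonneg hC₁0 hP), mul_nonneg hP hE,
    mul_le_mul_of_nonneg_left hlen' hC₁0, mul_nonneg hC₁0 (mul_nonneg (sq_nonneg (b - a)) hB)]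

lemma integral_iteratedDeriv_sq_le {W u : ℝ → ℝ} (hW : Continuous W)
    (hH2 : ∀ s : ℝ, min ((s + 1) ^ 2) ((s - 1) ^ 2) ≤ W s) {p : ℕ} (hp : 0 < p) {C₁ C₂ : ℝ}
    (hC₁0 : 0 ≤ C₁) (hC₂0 : 0 ≤ C₂) (hC₁ : IsInterpolationConst p 1 C₁)
    (hC₂ : IsInterpolationConst 1 p C₂) (hu : ContDiff ℝ (p + 1 : ℕ) u) {a b : ℝ} (hab : a < b) :
    ∫ t in a..b, iteratedDeriv p u t ^ 2 ≤
      (1 + 9 * C₁ + 8 * C₁ * (1 + 4 * C₂)) * (((b - a) ^ (2 * p))⁻¹ * (∫ t in a..b, W (u t)) +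
        (b - a) ^ 2 * ∫ t in a..b, iteratedDeriv (p + 1) u t ^ 2) := by
  have hR : 0 ≤ ((b - a) ^ (2 * p))⁻¹ * (∫ t in a..b, W (u t)) +
      (b - a) ^ 2 * ∫ t in a..b, iteratedDeriv (p + 1) u t ^ 2 := by
    have := intervalIntegral.integral_nonneg (μ := volume) hab.le fun t _ =>
      nonneg_of_min_sq_le hH2 (u t)
    have := intervalIntegral.integral_nonneg (μ := volume) hab.le fun t _ =>
      sq_nonneg (iteratedDeriv (p + 1) u t)
    have := sub_pos.2 hab
    positivity
  by_cases hcross : (∃ s ∈ Icc a b, u s ≤ -(1 / 2)) ∧ ∃ t ∈ Icc a b, 1 / 2 ≤ u t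
  · obtain ⟨⟨s, hs, hus⟩, t, ht, hut⟩ := hcross
    exact (integral_iteratedDeriv_sq_le_of_transition hW hH2 hC₁0 hC₂0 hC₁ hC₂ hu hab
      hs ht hus hut).trans (mul_le_mul_of_nonneg_right (by linarith) hR)
  · rw [not_and_or] at hcross
    push Not at hcross
    exact (integral_iteratedDeriv_sq_le_of_one_sided hW hH2 hp hC₁0 hC₁ hu hab
      hcross).trans (mul_le_mul_of_nonneg_right (by nlinarith) hR)

theorem statement0_general (k : ℕ) (hk : 1 < k) (W : ℝ → ℝ)
    (hWcont : Continuous W)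
    (hH2 : ∀ s : ℝ, min ((s + 1) ^ 2) ((s - 1) ^ 2) ≤ W s) :
    ∃ qstar : ℝ, 0 < qstar ∧
      ∀ a b : ℝ, a < b → ∀ q : ℝ, q < qstar →
        ∀ u : ℝ → ℝ, ContDiff ℝ (k : ℕ∞) u →
          q * ∫ t in Set.Ioo a b, (iteratedDeriv (k - 1) u t) ^ 2 ≤
            ((b - a) ^ (2 * (k - 1)))⁻¹ * (∫ t in Set.Ioo a b, W (u t)) +
              (b - a) ^ 2 * ∫ t in Set.Ioo a b, (iteratedDeriv k u t) ^ 2 := by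
  obtain ⟨p, rfl⟩ : ∃ p, k = p + 1 := ⟨k - 1, by omega⟩
  obtain ⟨C₁, hC₁0, hC₁⟩ := exists_isInterpolationConst p 1
  obtain ⟨C₂, hC₂0, hC₂⟩ := exists_isInterpolationConst 1 p
  have hM : 0 < 1 + 9 * C₁ + 8 * C₁ * (1 + 4 * C₂) := by positivity
  refine ⟨(1 + 9 * C₁ + 8 * C₁ * (1 + 4 * C₂))⁻¹, inv_pos.2 hM, fun a b hab q hq u hu => ?_⟩
  simp only [← integral_Ioc_eq_integral_Ioo, ← intervalIntegral.integral_of_le hab.le,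
    Nat.add_sub_cancel]
  have hbound := integral_iteratedDeriv_sq_le hWcont hH2 (by omega) hC₁0 hC₂0 hC₁ hC₂
    (by exact_mod_cast hu) hab
  have hA : 0 ≤ ∫ t in a..b, iteratedDeriv p u t ^ 2 :=
    intervalIntegral.integral_nonneg hab.le fun t _ => sq_nonneg _
  calc q * ∫ t in a..b, iteratedDeriv p u t ^ 2
      ≤ (1 + 9 * C₁ + 8 * C₁ * (1 + 4 * C₂))⁻¹ * ∫ t in a..b, iteratedDeriv p u t ^ 2 := by
        gcongr
    _ ≤ _ := by rwa [inv_mul_le_iff₀ hM]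

/-- One-dimensional nonlinear interpolation inequality for the
`(k-1)`-st derivative (Lemma 3.1 analogue): there is a constant `q* > 0`,
independent of the interval, such that for every bounded open interval `(a,b)`,
every `q < q*` and every `u` of class `C^k`,
`q ∫ |u^(k-1)|² ≤ (b-a)^{-2(k-1)} ∫ W(u) + (b-a)² ∫ |u^(k)|²`. -/
theorem statement0 (k : ℕ) (hk : 1 < k) (W : ℝ → ℝ)
    (hWcont : Continuous W) (hWnonneg : ∀ s, 0 ≤ W s)
    (hH2 : ∀ s : ℝ, min ((s + 1) ^ 2) ((s - 1) ^ 2) ≤ W s) :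
    ∃ qstar : ℝ, 0 < qstar ∧
      ∀ a b : ℝ, a < b → ∀ q : ℝ, q < qstar →
        ∀ u : ℝ → ℝ, ContDiff ℝ (k : ℕ∞) u →
          q * ∫ t in Set.Ioo a b, (iteratedDeriv (k - 1) u t) ^ 2 ≤
            ((b - a) ^ (2 * (k - 1)))⁻¹ * (∫ t in Set.Ioo a b, W (u t)) +
              (b - a) ^ 2 * ∫ t in Set.Ioo a b, (iteratedDeriv k u t) ^ 2 :=
  statement0_general k hk W hWcont hH2
end

section
/- Let k > 1 be an integer and let W : ℝ → ℝ be continuous, nonnegative and satisfy (H2). Then for every ℓ ∈ {1,…,k-1} there exists a constant q'_ℓ > 0, independent of the interval, such that for every bounded open interval (a,b) with a < b, every real number q < q'_ℓ, and every function u : ℝ → ℝ of class C^k, one has q · ∫_a^b |u^{(ℓ)}(t)|² dt ≤ (b-a)^{-2ℓ} · ∫_a^b W(u(t)) dt + (b-a)^{2(k-ℓ)} · ∫_a^b |u^{(k)}(t)|² dt. -/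
/-!
By the affine change of variables `t ↦ a + (b - a) t` it suffices to work on `(0, 1)`.
There, the first-moment bound and the mean value theorem between points of the outer thirds of
an interval of length `d` give, inductively, a point where `|w^(j)| ≤ C d^(-(j+1)) ∫ |w|`; the
fundamental theorem of calculus and Jensen's inequality then give the linear interpolation bound
`|w^(ℓ)(t)|² ≤ C (∫ w² + ∫ |w^(k)|²)` for `ℓ < k` and `t ∈ [0, 1]`.

Write `A = ∫ G(v)`, with `G(s) = min ((s+1)², (s-1)²) = (|s| - 1)²`, and `B = ∫ |v^(k)|²`.
If `v` has no zero on `[0, 1]`, it has a sign, `G ∘ v = (v ∓ 1)²`, and the linear bound applied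
to `v ∓ 1` gives `∫ |v^(ℓ)|² ≤ C (A + B)`. If `v` vanishes somewhere and `A + B < 1`, the
linear bound with `∫ v² ≤ 2A + 2` makes `v'` uniformly bounded, so `|v| ≤ 1/2` on an interval
of fixed length, where `G(v) ≥ 1/4`; thus `A + B ≥ δ`, and the linear bound applied to `v`
gives `∫ |v^(ℓ)|² ≤ C (2A + 2 + B) ≤ C (2 + 2/δ) (A + B)`.
-/

open MeasureTheory Set

def doubleWell (s : ℝ) : ℝ := min ((s + 1) ^ 2) ((s - 1) ^ 2)

lemma doubleWell_eq_sq_abs_sub_one (s : ℝ) : doubleWell s = (|s| - 1) ^ 2 := by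
  rcases le_total 0 s with h | h
  · rw [doubleWell, abs_of_nonneg h, min_eq_right (by nlinarith)]
  · rw [doubleWell, abs_of_nonpos h, min_eq_left (by nlinarith)]; ring

lemma doubleWell_nonneg (s : ℝ) : 0 ≤ doubleWell s := le_min (sq_nonneg _) (sq_nonneg _)

lemma continuous_doubleWell : Continuous doubleWell := by
  unfold doubleWell; fun_prop

lemma sq_le_two_mul_doubleWell_add_two (s : ℝ) : s ^ 2 ≤ 2 * doubleWell s + 2 := by
  rw [doubleWell_eq_sq_abs_sub_one, ← sq_abs]
  nlinarith [sq_nonneg (|s| - 2)]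

lemma quarter_le_doubleWell {s : ℝ} (h : |s| ≤ 1 / 2) : 1 / 4 ≤ doubleWell s := by
  rw [doubleWell_eq_sq_abs_sub_one]
  nlinarith [abs_nonneg s]

lemma doubleWell_of_pos {s : ℝ} (h : 0 < s) : doubleWell s = (-1 + s) ^ 2 := by
  rw [doubleWell_eq_sq_abs_sub_one, abs_of_pos h]; ring

lemma doubleWell_of_neg {s : ℝ} (h : s < 0) : doubleWell s = (1 + s) ^ 2 := by
  rw [doubleWell_eq_sq_abs_sub_one, abs_of_neg h]; ring

lemma Continuous.integrableOn_Ioo {f : ℝ → ℝ} (hf : Continuous f) (a b : ℝ) :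
    IntegrableOn f (Ioo a b) :=
  hf.integrableOn_Icc.mono_set Ioo_subset_Icc_self

lemma setIntegral_mono_set_Ioo {f : ℝ → ℝ} (hf : Continuous f) (hf0 : ∀ t, 0 ≤ f t)
    {a b c d : ℝ} (h : Ioo a b ⊆ Ioo c d) : ∫ t in Ioo a b, f t ≤ ∫ t in Ioo c d, f t :=
  setIntegral_mono_set (hf.integrableOn_Ioo c d) (Filter.Eventually.of_forall hf0) h.eventuallyLE

lemma sq_setIntegral_Ioo_zero_one_le {f : ℝ → ℝ} (hf : Continuous f) :
    (∫ t in Ioo (0:ℝ) 1, f t) ^ 2 ≤ ∫ t in Ioo (0:ℝ) 1, f t ^ 2 := by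
  have hvol : volume.real (Ioo (0:ℝ) 1) = 1 := by simp
  have h := (Even.convexOn_pow (n := 2) even_two).map_set_average_le
    (continuous_pow 2).continuousOn isClosed_univ (μ := volume) (t := Ioo (0:ℝ) 1)
    (by simp) (by simp)
    (Filter.Eventually.of_forall fun _ => mem_univ _) (hf.integrableOn_Ioo 0 1)
    ((hf.pow 2).integrableOn_Ioo 0 1)
  simpa [setAverage_eq, hvol] using h

lemma abs_sub_le_setIntegral_abs_deriv {f : ℝ → ℝ} (hf : Differentiable ℝ f)
    (hf' : Continuous (deriv f)) {a b x y : ℝ} (hx : x ∈ Icc a b) (hy : y ∈ Icc a b) :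
    |f y - f x| ≤ ∫ t in Ioo a b, |deriv f t| := by
  rw [← intervalIntegral.integral_deriv_eq_sub (fun t _ => hf t) (hf'.intervalIntegrable x y),
    ← integral_Ioc_eq_integral_Ioo]
  refine (intervalIntegral.norm_integral_le_integral_norm_uIoc).trans
    (setIntegral_mono_set (hf'.norm.integrableOn_Icc.mono_set Ioc_subset_Icc_self)
      (Filter.Eventually.of_forall fun _ => norm_nonneg _) ?_)
  rw [← uIoc_of_le (hx.1.trans hx.2)]
  exact (uIoc_subset_uIoc_of_uIcc_subset_uIcc (uIcc_subset_uIcc (Icc_subset_uIcc hx)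
    (Icc_subset_uIcc hy))).eventuallyLE

lemma exists_mem_Ioo_abs_deriv_le {f : ℝ → ℝ} (hf : Differentiable ℝ f) {x y h B : ℝ}
    (hxy : h ≤ y - x) (hh : 0 < h) (hx : |f x| ≤ B) (hy : |f y| ≤ B) :
    ∃ η ∈ Ioo x y, |deriv f η| ≤ 2 * B / h := by
  have hlt : x < y := by linarith
  obtain ⟨η, hη, hslope⟩ := exists_deriv_eq_slope f hlt hf.continuous.continuousOn
    hf.differentiableOn
  refine ⟨η, hη, ?_⟩
  rw [hslope, abs_div, abs_of_pos (sub_pos.2 hlt)]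
  exact div_le_div₀ (by linarith [abs_nonneg (f x)])
    (by linarith [abs_sub (f y) (f x)]) hh hxy

lemma exists_mem_Ioo_abs_iteratedDeriv_le (j : ℕ) :
    ∃ C > 0, ∀ w : ℝ → ℝ, ContDiff ℝ j w → ∀ α β : ℝ, α < β →
      ∃ ξ ∈ Ioo α β,
        |iteratedDeriv j w ξ| ≤ C / (β - α) ^ (j + 1) * ∫ t in Ioo α β, |w t| := by
  induction j with
  | zero =>
    refine ⟨1, one_pos, fun w hw α β hαβ => ?_⟩
    obtain ⟨ξ, hξ, hle⟩ := exists_le_setAverage (μ := volume) (s := Ioo α β)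
        (by simpa using hαβ) (by simp) (hw.continuous.abs.integrableOn_Ioo α β)
    refine ⟨ξ, hξ, ?_⟩
    simpa [setAverage_eq, Real.volume_real_Ioo_of_le hαβ.le, div_eq_inv_mul] using hle
  | succ j ih =>
    obtain ⟨C, hC, hCw⟩ := ih
    refine ⟨2 * 3 ^ (j + 2) * C, by positivity, fun w hw α β hαβ => ?_⟩
    set d := β - α
    have hd0 : 0 < d := sub_pos.2 hαβ
    have hwj : ContDiff ℝ j w := hw.of_le (by exact_mod_cast j.le_succ)
    obtain ⟨ξ₁, hξ₁, h₁⟩ := hCw w hwj α (α + d / 3) (by linarith)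
    obtain ⟨ξ₂, hξ₂, h₂⟩ := hCw w hwj (β - d / 3) β (by linarith)
    rw [show α + d / 3 - α = d / 3 by ring] at h₁
    rw [show β - (β - d / 3) = d / 3 by ring] at h₂
    set X := ∫ t in Ioo α β, |w t|
    have hC₃ : 0 ≤ C / (d / 3) ^ (j + 1) := by positivity
    have hX₁ : ∫ t in Ioo α (α + d / 3), |w t| ≤ X :=
      setIntegral_mono_set_Ioo hw.continuous.abs (fun _ => abs_nonneg _)
        (Ioo_subset_Ioo_right (by linarith))
    have hX₂ : ∫ t in Ioo (β - d / 3) β, |w t| ≤ X :=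
      setIntegral_mono_set_Ioo hw.continuous.abs (fun _ => abs_nonneg _)
        (Ioo_subset_Ioo_left (by linarith))
    obtain ⟨η, hη, hηB⟩ := exists_mem_Ioo_abs_deriv_le
      (hw.differentiable_iteratedDeriv j (by exact_mod_cast j.lt_succ_self))
      (by linarith [hξ₁.2, hξ₂.1] : d / 3 ≤ ξ₂ - ξ₁) (by positivity)
      (h₁.trans (mul_le_mul_of_nonneg_left hX₁ hC₃))
      (h₂.trans (mul_le_mul_of_nonneg_left hX₂ hC₃))
    refine ⟨η, ⟨hξ₁.1.trans hη.1, hη.2.trans hξ₂.2⟩, ?_⟩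
    rw [iteratedDeriv_succ]
    calc _ ≤ 2 * (C / (d / 3) ^ (j + 1) * X) / (d / 3) := hηB
      _ = 2 * 3 ^ (j + 2) * C / d ^ (j + 1 + 1) * X := by
          rw [div_pow]
          field_simp
          ring

lemma setIntegral_Ioo_zero_one_le_of_le {f : ℝ → ℝ} (hf : Continuous f) {M : ℝ}
    (h : ∀ t ∈ Icc (0:ℝ) 1, f t ≤ M) : ∫ t in Ioo (0:ℝ) 1, f t ≤ M := by
  have := setIntegral_mono_on (hf.integrableOn_Ioo 0 1) (integrableOn_const (C := M) (by simp))
    measurableSet_Ioo fun t ht => h t (Ioo_subset_Icc_self ht)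
  simpa using this

lemma exists_abs_iteratedDeriv_le_add (j : ℕ) :
    ∃ C > 0, ∀ w : ℝ → ℝ, ContDiff ℝ (j + 1) w → ∀ t ∈ Icc (0:ℝ) 1,
      |iteratedDeriv j w t| ≤
        C * (∫ x in Ioo (0:ℝ) 1, |w x|) +
          ∫ x in Ioo (0:ℝ) 1, |iteratedDeriv (j + 1) w x| := by
  obtain ⟨C, hC, hCw⟩ := exists_mem_Ioo_abs_iteratedDeriv_le j
  refine ⟨C, hC, fun w hw t ht => ?_⟩
  obtain ⟨ξ, hξ, hξC⟩ := hCw w (hw.of_le (by norm_cast; omega)) 0 1 one_pos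
  have hdiff : Differentiable ℝ (iteratedDeriv j w) :=
    hw.differentiable_iteratedDeriv j (by norm_cast; omega)
  have hcont : Continuous (deriv (iteratedDeriv j w)) := by
    rw [← iteratedDeriv_succ]; exact hw.continuous_iteratedDeriv (j + 1) le_rfl
  have hftc := abs_sub_le_setIntegral_abs_deriv hdiff hcont (Ioo_subset_Icc_self hξ) ht
  rw [← iteratedDeriv_succ] at hftc
  simp only [sub_zero, one_pow, div_one] at hξC
  linarith [abs_sub_abs_le_abs_sub (iteratedDeriv j w t) (iteratedDeriv j w ξ)]

lemma exists_abs_iteratedDeriv_le {j n : ℕ} (hjn : j < n) :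
    ∃ C > 0, ∀ w : ℝ → ℝ, ContDiff ℝ n w → ∀ t ∈ Icc (0:ℝ) 1,
      |iteratedDeriv j w t| ≤
        C * ((∫ x in Ioo (0:ℝ) 1, |w x|) + ∫ x in Ioo (0:ℝ) 1, |iteratedDeriv n w x|) := by
  obtain ⟨m, rfl⟩ := Nat.exists_eq_add_of_lt hjn
  clear hjn
  induction m generalizing j with
  | zero =>
    obtain ⟨C, hC, hCw⟩ := exists_abs_iteratedDeriv_le_add j
    refine ⟨C + 1, by positivity, fun w hw t ht => (hCw w hw t ht).trans ?_⟩
    have hX : 0 ≤ ∫ x in Ioo (0:ℝ) 1, |w x| :=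
      setIntegral_nonneg measurableSet_Ioo fun _ _ => abs_nonneg _
    have hY : 0 ≤ ∫ x in Ioo (0:ℝ) 1, |iteratedDeriv (j + 1) w x| :=
      setIntegral_nonneg measurableSet_Ioo fun _ _ => abs_nonneg _
    simp only [add_zero]
    nlinarith
  | succ m ih =>
    obtain ⟨C, hC, hCw⟩ := exists_abs_iteratedDeriv_le_add j
    obtain ⟨C', hC', hC'w⟩ := ih (j := j + 1)
    refine ⟨C + C', by positivity, fun w hw t ht =>
      (hCw w (hw.of_le (by norm_cast; omega)) t ht).trans ?_⟩
    rw [show j + (m + 1) + 1 = j + 1 + m + 1 by ring] at hw ⊢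
    set X := ∫ x in Ioo (0:ℝ) 1, |w x|
    set Y := ∫ x in Ioo (0:ℝ) 1, |iteratedDeriv (j + 1 + m + 1) w x|
    have hX : 0 ≤ X := setIntegral_nonneg measurableSet_Ioo fun _ _ => abs_nonneg _
    have hY : 0 ≤ Y := setIntegral_nonneg measurableSet_Ioo fun _ _ => abs_nonneg _
    have hnext : ∫ x in Ioo (0:ℝ) 1, |iteratedDeriv (j + 1) w x| ≤ C' * (X + Y) :=
      setIntegral_Ioo_zero_one_le_of_le (hw.continuous_iteratedDeriv _ (by norm_cast; omega)).abs
        (hC'w w hw)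
    nlinarith

lemma exists_sq_iteratedDeriv_le {j n : ℕ} (hjn : j < n) :
    ∃ C > 0, ∀ w : ℝ → ℝ, ContDiff ℝ n w → ∀ t ∈ Icc (0:ℝ) 1,
      iteratedDeriv j w t ^ 2 ≤
        C * ((∫ x in Ioo (0:ℝ) 1, w x ^ 2) +
          ∫ x in Ioo (0:ℝ) 1, iteratedDeriv n w x ^ 2) := by
  obtain ⟨C, hC, hCw⟩ := exists_abs_iteratedDeriv_le hjn
  refine ⟨2 * C ^ 2, by positivity, fun w hw t ht => ?_⟩
  have hcont : Continuous (iteratedDeriv n w) := hw.continuous_iteratedDeriv n le_rfl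
  have hX := sq_setIntegral_Ioo_zero_one_le hw.continuous.abs
  have hY := sq_setIntegral_Ioo_zero_one_le hcont.abs
  simp only [sq_abs] at hX hY
  have hpt := hCw w hw t ht
  set X := ∫ x in Ioo (0:ℝ) 1, |w x|
  set Y := ∫ x in Ioo (0:ℝ) 1, |iteratedDeriv n w x|
  have hX0 : 0 ≤ X := setIntegral_nonneg measurableSet_Ioo fun _ _ => abs_nonneg _
  have hY0 : 0 ≤ Y := setIntegral_nonneg measurableSet_Ioo fun _ _ => abs_nonneg _
  calc iteratedDeriv j w t ^ 2 = |iteratedDeriv j w t| ^ 2 := (sq_abs _).symm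
    _ ≤ (C * (X + Y)) ^ 2 := by gcongr
    _ ≤ 2 * C ^ 2 * (X ^ 2 + Y ^ 2) := by nlinarith [sq_nonneg (X - Y)]
    _ ≤ _ := by gcongr

lemma exists_setIntegral_sq_iteratedDeriv_le {j n : ℕ} (hjn : j < n) :
    ∃ C > 0, ∀ w : ℝ → ℝ, ContDiff ℝ n w →
      ∫ x in Ioo (0:ℝ) 1, iteratedDeriv j w x ^ 2 ≤
        C * ((∫ x in Ioo (0:ℝ) 1, w x ^ 2) +
          ∫ x in Ioo (0:ℝ) 1, iteratedDeriv n w x ^ 2) := by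
  obtain ⟨C, hC, hCw⟩ := exists_sq_iteratedDeriv_le hjn
  exact ⟨C, hC, fun w hw => setIntegral_Ioo_zero_one_le_of_le
    ((hw.continuous_iteratedDeriv j (by exact_mod_cast hjn.le)).pow 2) (hCw w hw)⟩

lemma setIntegral_sq_le_two_mul_doubleWell_add_two {v : ℝ → ℝ} (hv : Continuous v) :
    ∫ t in Ioo (0:ℝ) 1, v t ^ 2 ≤ 2 * (∫ t in Ioo (0:ℝ) 1, doubleWell (v t)) + 2 := by
  have hG : IntegrableOn (fun t => 2 * doubleWell (v t)) (Ioo (0:ℝ) 1) :=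
    ((continuous_doubleWell.comp hv).integrableOn_Ioo 0 1).const_mul 2
  have h2 : IntegrableOn (fun _ => (2:ℝ)) (Ioo (0:ℝ) 1) := integrableOn_const (by simp)
  have h := setIntegral_mono_on (f := fun t => v t ^ 2) (g := fun t => 2 * doubleWell (v t) + 2)
    ((hv.pow 2).integrableOn_Ioo 0 1) (hG.add h2)
    measurableSet_Ioo fun t _ => sq_le_two_mul_doubleWell_add_two (v t)
  rw [integral_add hG h2, integral_const_mul, setIntegral_const] at h
  simpa using h

-- The shift is written `c + v t` so that `iteratedDeriv_const_add` applies to it.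
lemma exists_doubleWell_eq_sq_add_of_ne_zero {v : ℝ → ℝ} (hv : Continuous v)
    (h : ∀ t ∈ Icc (0:ℝ) 1, v t ≠ 0) :
    ∃ c : ℝ, ∀ t ∈ Icc (0:ℝ) 1, doubleWell (v t) = (c + v t) ^ 2 := by
  have h0 : (0:ℝ) ∈ Icc (0:ℝ) 1 := ⟨le_rfl, zero_le_one⟩
  have hivt : ∀ a ∈ Icc (0:ℝ) 1, ∀ b ∈ Icc (0:ℝ) 1, 0 ∉ Icc (v a) (v b) := by
    intro a ha b hb hmem
    obtain ⟨x, hx, hx0⟩ := isPreconnected_Icc.intermediate_value ha hb hv.continuousOn hmem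
    exact h x hx hx0
  rcases (h 0 h0).lt_or_gt with hneg | hpos
  · refine ⟨1, fun t ht => doubleWell_of_neg ?_⟩
    by_contra! hnn
    exact hivt 0 h0 t ht ⟨hneg.le, hnn⟩
  · refine ⟨-1, fun t ht => doubleWell_of_pos ?_⟩
    by_contra! hnp
    exact hivt t ht 0 h0 ⟨hnp, hpos.le⟩

lemma le_setIntegral_doubleWell_of_map_eq_zero {f : ℝ → ℝ} (hf : Differentiable ℝ f)
    {M : ℝ} (hM : 0 ≤ M) (hbound : ∀ t ∈ Icc (0:ℝ) 1, |deriv f t| ≤ M)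
    {c : ℝ} (hc : c ∈ Icc (0:ℝ) 1) (hfc : f c = 0) :
    1 / (8 * (M + 1)) ≤ ∫ t in Ioo (0:ℝ) 1, doubleWell (f t) := by
  set h := 1 / (2 * (M + 1)) with hh
  have hh0 : 0 < h := by positivity
  have hh1 : h ≤ 1 / 2 := by rw [hh, div_le_div_iff₀ (by positivity) two_pos]; linarith
  have hMh : M * h ≤ 1 / 2 := by
    rw [hh, mul_one_div, div_le_div_iff₀ (by positivity) two_pos]; linarith
  have hlen : h ≤ min 1 (c + h) - max 0 (c - h) := by
    rcases max_cases 0 (c - h) with ⟨hp, _⟩ | ⟨hp, _⟩ <;>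
    rcases min_cases 1 (c + h) with ⟨hr, _⟩ | ⟨hr, _⟩ <;>
    · rw [hp, hr]; linarith [hc.1, hc.2]
  set p := max 0 (c - h)
  set r := min 1 (c + h)
  have hsub : Ioo p r ⊆ Ioo 0 1 := Ioo_subset_Ioo (le_max_left _ _) (min_le_left _ _)
  have hquarter : ∀ x ∈ Ioo p r, 1 / 4 ≤ doubleWell (f x) := by
    intro x hx
    apply quarter_le_doubleWell
    have hlip := (convex_Icc (0:ℝ) 1).norm_image_sub_le_of_norm_deriv_le
      (fun t _ => hf t) hbound hc (Ioo_subset_Icc_self (hsub hx))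
    have hxc : |x - c| ≤ h := abs_le.2
      ⟨by linarith [hx.1, le_max_right 0 (c - h)], by linarith [hx.2, min_le_right 1 (c + h)]⟩
    simp only [Real.norm_eq_abs, hfc, sub_zero] at hlip
    nlinarith [abs_nonneg (x - c)]
  have hG : IntegrableOn (fun t => doubleWell (f t)) (Ioo (0:ℝ) 1) :=
    (continuous_doubleWell.comp hf.continuous).integrableOn_Ioo 0 1
  calc 1 / (8 * (M + 1)) = 1 / 4 * h := by rw [hh]; field_simp; ring
    _ ≤ 1 / 4 * volume.real (Ioo p r) := by
      rw [Real.volume_real_Ioo_of_le (by linarith)]; linarith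
    _ ≤ ∫ t in Ioo p r, doubleWell (f t) :=
      setIntegral_ge_of_const_le_real measurableSet_Ioo (by simp) hquarter (hG.mono_set hsub)
    _ ≤ ∫ t in Ioo (0:ℝ) 1, doubleWell (f t) :=
      setIntegral_mono_set_Ioo (continuous_doubleWell.comp hf.continuous)
        (fun _ => doubleWell_nonneg _) hsub

lemma exists_pos_le_energy_of_map_eq_zero {k : ℕ} (hk : 1 < k) :
    ∃ δ > 0, ∀ v : ℝ → ℝ, ContDiff ℝ k v → (∃ c ∈ Icc (0:ℝ) 1, v c = 0) →
      δ ≤ (∫ t in Ioo (0:ℝ) 1, doubleWell (v t)) +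
        ∫ t in Ioo (0:ℝ) 1, iteratedDeriv k v t ^ 2 := by
  obtain ⟨C, hC, hCw⟩ := exists_sq_iteratedDeriv_le hk
  refine ⟨min 1 (1 / (8 * (√(4 * C) + 1))), by positivity, fun v hv ⟨c, hc, hvc⟩ => ?_⟩
  set A := ∫ t in Ioo (0:ℝ) 1, doubleWell (v t)
  set B := ∫ t in Ioo (0:ℝ) 1, iteratedDeriv k v t ^ 2
  have hA : 0 ≤ A := setIntegral_nonneg measurableSet_Ioo fun _ _ => doubleWell_nonneg _
  have hB : 0 ≤ B := setIntegral_nonneg measurableSet_Ioo fun _ _ => sq_nonneg _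
  rcases le_or_gt 1 (A + B) with hbig | hsmall
  · exact (min_le_left _ _).trans hbig
  have hK := setIntegral_sq_le_two_mul_doubleWell_add_two hv.continuous
  refine (min_le_right _ _).trans (le_add_of_le_of_nonneg ?_ hB)
  refine le_setIntegral_doubleWell_of_map_eq_zero (hv.differentiable (by norm_cast; omega))
    (Real.sqrt_nonneg _) (fun t ht => ?_) hc hvc
  rw [← iteratedDeriv_one]
  refine Real.abs_le_sqrt ((hCw v hv t ht).trans ?_)
  nlinarith

lemma exists_pos_nonlinear_interpolation_Ioo_zero_one {k ℓ : ℕ} (hℓ : 1 ≤ ℓ)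
    (hℓk : ℓ < k) :
    ∃ q > 0, ∀ v : ℝ → ℝ, ContDiff ℝ k v →
      q * ∫ t in Ioo (0:ℝ) 1, iteratedDeriv ℓ v t ^ 2 ≤
        (∫ t in Ioo (0:ℝ) 1, doubleWell (v t)) +
          ∫ t in Ioo (0:ℝ) 1, iteratedDeriv k v t ^ 2 := by
  obtain ⟨C, hC, hCw⟩ := exists_setIntegral_sq_iteratedDeriv_le hℓk
  obtain ⟨δ, hδ, hδw⟩ := exists_pos_le_energy_of_map_eq_zero (k := k) (by omega)
  set D := C * (2 + 2 / δ)
  have hD : 0 < D := by positivity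
  refine ⟨D⁻¹, inv_pos.2 hD, fun v hv => ?_⟩
  rw [inv_mul_le_iff₀ hD]
  set A := ∫ t in Ioo (0:ℝ) 1, doubleWell (v t)
  set B := ∫ t in Ioo (0:ℝ) 1, iteratedDeriv k v t ^ 2
  have hA : 0 ≤ A := setIntegral_nonneg measurableSet_Ioo fun _ _ => doubleWell_nonneg _
  have hB : 0 ≤ B := setIntegral_nonneg measurableSet_Ioo fun _ _ => sq_nonneg _
  have hCD : C ≤ D := le_mul_of_one_le_right hC.le (by linarith [div_pos two_pos hδ])
  by_cases hzero : ∃ c ∈ Icc (0:ℝ) 1, v c = 0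
  · have hAB := hδw v hv hzero
    have hK := setIntegral_sq_le_two_mul_doubleWell_add_two hv.continuous
    have h2 : 2 ≤ 2 / δ * (A + B) := by rw [div_mul_eq_mul_div, le_div_iff₀ hδ]; linarith
    calc _ ≤ C * ((∫ t in Ioo (0:ℝ) 1, v t ^ 2) + B) := hCw v hv
      _ ≤ C * (2 * A + 2 + B) := by gcongr
      _ ≤ D * (A + B) := by simp only [D]; nlinarith
  · push Not at hzero
    obtain ⟨c, hc⟩ := exists_doubleWell_eq_sq_add_of_ne_zero hv.continuous hzero
    have hshift := hCw (fun t => c + v t) (contDiff_const.add hv)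
    simp only [iteratedDeriv_const_add (by omega : 0 < ℓ),
      iteratedDeriv_const_add (by omega : 0 < k)] at hshift
    have hcA : ∫ t in Ioo (0:ℝ) 1, (c + v t) ^ 2 = A :=
      setIntegral_congr_fun measurableSet_Ioo fun t ht => (hc t (Ioo_subset_Icc_self ht)).symm
    rw [hcA] at hshift
    exact hshift.trans (by gcongr)

lemma iteratedDeriv_comp_affine {n : ℕ} {u : ℝ → ℝ} (hu : ContDiff ℝ n u) (a c : ℝ) :
    iteratedDeriv n (fun s => u (a + c * s)) =
      fun s => c ^ n * iteratedDeriv n u (a + c * s) := by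
  simpa only [iteratedDeriv_comp_const_add] using
    iteratedDeriv_comp_const_mul (f := fun y => u (a + y)) (hu.comp (by fun_prop)) c

lemma setIntegral_Ioo_zero_one_comp_affine (g : ℝ → ℝ) {a b : ℝ} (hab : a < b) :
    ∫ s in Ioo (0:ℝ) 1, g (a + (b - a) * s) = (b - a)⁻¹ * ∫ t in Ioo a b, g t := by
  have h := intervalIntegral.integral_comp_mul_add (a := 0) (b := 1) g (sub_ne_zero.2 hab.ne') a
  simp only [mul_zero, zero_add, mul_one, sub_add_cancel, smul_eq_mul,
    intervalIntegral.integral_of_le zero_le_one, intervalIntegral.integral_of_le hab.le,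
    integral_Ioc_eq_integral_Ioo] at h
  simpa only [add_comm a] using h

lemma exists_pos_nonlinear_interpolation_Ioo {k ℓ : ℕ} (hℓ : 1 ≤ ℓ) (hℓk : ℓ < k) :
    ∃ q > 0, ∀ a b : ℝ, a < b → ∀ u : ℝ → ℝ, ContDiff ℝ k u →
      q * ∫ t in Ioo a b, iteratedDeriv ℓ u t ^ 2 ≤
        ((b - a) ^ (2 * ℓ))⁻¹ * (∫ t in Ioo a b, doubleWell (u t)) +
          (b - a) ^ (2 * (k - ℓ)) * ∫ t in Ioo a b, iteratedDeriv k u t ^ 2 := by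
  obtain ⟨q, hq, hqw⟩ := exists_pos_nonlinear_interpolation_Ioo_zero_one hℓ hℓk
  refine ⟨q, hq, fun a b hab u hu => ?_⟩
  have hc : 0 < b - a := sub_pos.2 hab
  have hscale : ∀ j ≤ k,
      ∫ s in Ioo (0:ℝ) 1, iteratedDeriv j (fun s => u (a + (b - a) * s)) s ^ 2 =
        (b - a)⁻¹ * (b - a) ^ (2 * j) * ∫ t in Ioo a b, iteratedDeriv j u t ^ 2 := by
    intro j hj
    simp only [iteratedDeriv_comp_affine (hu.of_le (by exact_mod_cast hj)), mul_pow, ← pow_mul,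
      integral_const_mul,
      setIntegral_Ioo_zero_one_comp_affine (fun t => iteratedDeriv j u t ^ 2) hab]
    ring
  have h := hqw (fun s => u (a + (b - a) * s)) (hu.comp (by fun_prop))
  rw [hscale ℓ hℓk.le, hscale k le_rfl,
    setIntegral_Ioo_zero_one_comp_affine (fun t => doubleWell (u t)) hab] at h
  have hk : (b - a) ^ (2 * k) = (b - a) ^ (2 * (k - ℓ)) * (b - a) ^ (2 * ℓ) := by
    rw [← pow_add]; congr 1; omega
  refine le_of_mul_le_mul_left ?_ (by positivity : 0 < (b - a)⁻¹ * (b - a) ^ (2 * ℓ))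
  calc _ = q * ((b - a)⁻¹ * (b - a) ^ (2 * ℓ) *
          ∫ t in Ioo a b, iteratedDeriv ℓ u t ^ 2) := by ring
    _ ≤ _ := h
    _ = _ := by rw [hk]; field_simp

theorem statement1_general (k : ℕ) (W : ℝ → ℝ)
    (hWcont : Continuous W)
    (hH2 : ∀ s : ℝ, min ((s + 1) ^ 2) ((s - 1) ^ 2) ≤ W s) :
    ∀ ℓ : ℕ, 1 ≤ ℓ → ℓ ≤ k - 1 →
      ∃ qℓ : ℝ, 0 < qℓ ∧
        ∀ a b : ℝ, a < b → ∀ q : ℝ, q < qℓ →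
          ∀ u : ℝ → ℝ, ContDiff ℝ (k : ℕ∞) u →
            q * ∫ t in Set.Ioo a b, (iteratedDeriv ℓ u t) ^ 2 ≤
              ((b - a) ^ (2 * ℓ))⁻¹ * (∫ t in Set.Ioo a b, W (u t)) +
                (b - a) ^ (2 * (k - ℓ)) * ∫ t in Set.Ioo a b, (iteratedDeriv k u t) ^ 2 := by
  intro ℓ hℓ hℓk
  obtain ⟨q₀, hq₀, h⟩ := exists_pos_nonlinear_interpolation_Ioo hℓ (by omega : ℓ < k)
  refine ⟨q₀, hq₀, fun a b hab q hq u hu => ?_⟩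
  have hW : ∫ t in Ioo a b, doubleWell (u t) ≤ ∫ t in Ioo a b, W (u t) :=
    setIntegral_mono_on ((continuous_doubleWell.comp hu.continuous).integrableOn_Ioo a b)
      ((hWcont.comp hu.continuous).integrableOn_Ioo a b) measurableSet_Ioo fun t _ => hH2 (u t)
  calc q * ∫ t in Ioo a b, iteratedDeriv ℓ u t ^ 2
      ≤ q₀ * ∫ t in Ioo a b, iteratedDeriv ℓ u t ^ 2 :=
        mul_le_mul_of_nonneg_right hq.le
          (setIntegral_nonneg measurableSet_Ioo fun _ _ => sq_nonneg _)
    _ ≤ _ := h a b hab u hu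
    _ ≤ _ := by gcongr

/-- One-dimensional nonlinear interpolation inequality for every
intermediate derivative `ℓ ∈ {1,…,k-1}`: there is a constant `q'_ℓ > 0`,
independent of the interval, such that for every bounded open interval `(a,b)`,
every `q < q'_ℓ` and every `u` of class `C^k`,
`q ∫ |u^(ℓ)|² ≤ (b-a)^{-2ℓ} ∫ W(u) + (b-a)^{2(k-ℓ)} ∫ |u^(k)|²`. -/
theorem statement1 (k : ℕ) (hk : 1 < k) (W : ℝ → ℝ)
    (hWcont : Continuous W) (hWnonneg : ∀ s, 0 ≤ W s)
    (hH2 : ∀ s : ℝ, min ((s + 1) ^ 2) ((s - 1) ^ 2) ≤ W s) :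
    ∀ ℓ : ℕ, 1 ≤ ℓ → ℓ ≤ k - 1 →
      ∃ qℓ : ℝ, 0 < qℓ ∧
        ∀ a b : ℝ, a < b → ∀ q : ℝ, q < qℓ →
          ∀ u : ℝ → ℝ, ContDiff ℝ (k : ℕ∞) u →
            q * ∫ t in Set.Ioo a b, (iteratedDeriv ℓ u t) ^ 2 ≤
              ((b - a) ^ (2 * ℓ))⁻¹ * (∫ t in Set.Ioo a b, W (u t)) +
                (b - a) ^ (2 * (k - ℓ)) * ∫ t in Set.Ioo a b, (iteratedDeriv k u t) ^ 2 :=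
  statement1_general k W hWcont hH2
end

section
/- Let I ⊂ ℝ be a bounded open interval and let W : ℝ → ℝ be continuous, nonnegative and satisfy (H1) and (H2). Let u_n, u : I → ℝ be measurable functions such that u_n → u in measure on I and ∫_I W(u_n) dt → 0 as n → +∞. Then u(t) ∈ {-1, 1} for almost every t ∈ I and ∫_I |u_n - u|² dt → 0 as n → +∞. -/
/-!
Along a subsequence converging almost everywhere, Fatou's lemma and the continuity of `W` give
`∫ W(u) = 0`, so `u` takes values in the zero set `{-1, 1}` of `W`. For the `L²` convergence,
since `u = ±1` a.e., (H2) bounds `(u_n - u)²` by `2 W(u_n)` where `|u_n - u| < 1` and by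
`2 W(u_n) + 8` elsewhere; the integral of the first term vanishes by assumption and the measure
of the set where the second is needed vanishes by convergence in measure.
-/

open MeasureTheory Filter Topology
open scoped ENNReal

theorem MeasureTheory.TendstoInMeasure.lintegral_comp_le_of_tendsto
    {α E : Type*} [MeasurableSpace α] {μ : Measure α} [MetricSpace E] [MeasurableSpace E]
    [OpensMeasurableSpace E] {u : ℕ → α → E} {g : α → E} (hug : TendstoInMeasure μ u atTop g)
    (hu : ∀ n, AEMeasurable (u n) μ) {Φ : E → ℝ≥0∞} (hΦ : Continuous Φ) {L : ℝ≥0∞}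
    (hL : Tendsto (fun n => ∫⁻ x, Φ (u n x) ∂μ) atTop (𝓝 L)) :
    ∫⁻ x, Φ (g x) ∂μ ≤ L := by
  obtain ⟨ns, hns, hae⟩ := hug.exists_seq_tendsto_ae
  calc ∫⁻ x, Φ (g x) ∂μ = ∫⁻ x, liminf (fun k => Φ (u (ns k) x)) atTop ∂μ :=
        lintegral_congr_ae (hae.mono fun x hx => ((hΦ.tendsto _).comp hx).liminf_eq.symm)
    _ ≤ liminf (fun k => ∫⁻ x, Φ (u (ns k) x) ∂μ) atTop :=
        lintegral_liminf_le' fun k => hΦ.measurable.comp_aemeasurable (hu (ns k))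
    _ = L := (hL.comp hns.tendsto_atTop).liminf_eq

theorem sq_sub_le_two_mul_min_sq_add {x c : ℝ} (hc : c = 1 ∨ c = -1) :
    (x - c) ^ 2 ≤ 2 * min ((x + 1) ^ 2) ((x - 1) ^ 2) + if 1 ≤ |x - c| then 8 else 0 := by
  rcases le_total ((x + 1) ^ 2) ((x - 1) ^ 2) with h | h <;>
    simp only [min_eq_left, min_eq_right, h] <;> split_ifs with h1 <;>
    rcases hc with rfl | rfl <;>
    first
    | nlinarith [sq_nonneg (x + 3), sq_nonneg (x - 3)]
    | (rw [not_le, abs_lt] at h1; nlinarith)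

section DoubleWell

variable {W : ℝ → ℝ} (hH2 : ∀ s : ℝ, min ((s + 1) ^ 2) ((s - 1) ^ 2) ≤ W s)
include hH2

theorem ofReal_sq_sub_le_of_double_well (x : ℝ) {c : ℝ} (hc : c = 1 ∨ c = -1) :
    ENNReal.ofReal ((x - c) ^ 2) ≤
      2 * ENNReal.ofReal (W x) + if 1 ≤ dist x c then 8 else 0 := by
  have hx := sq_sub_le_two_mul_min_sq_add (x := x) hc
  rw [← Real.dist_eq] at hx
  calc ENNReal.ofReal ((x - c) ^ 2)
      ≤ ENNReal.ofReal (2 * W x + if 1 ≤ dist x c then 8 else 0) :=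
        ENNReal.ofReal_le_ofReal (by linarith [hH2 x])
    _ ≤ ENNReal.ofReal (2 * W x) + ENNReal.ofReal (if 1 ≤ dist x c then 8 else 0) :=
        ENNReal.ofReal_add_le
    _ = 2 * ENNReal.ofReal (W x) + if 1 ≤ dist x c then 8 else 0 := by
        rw [ENNReal.ofReal_mul zero_le_two, ENNReal.ofReal_ofNat]
        split_ifs <;> simp

theorem lintegral_ofReal_sq_sub_le_of_double_well {α : Type*} [MeasurableSpace α]
    {μ : Measure α} {f g : α → ℝ} (hf : Measurable f) (hg : Measurable g)
    (hg1 : ∀ᵐ x ∂μ, g x = 1 ∨ g x = -1) :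
    ∫⁻ x, ENNReal.ofReal ((f x - g x) ^ 2) ∂μ ≤
      2 * ∫⁻ x, ENNReal.ofReal (W (f x)) ∂μ + 8 * μ {x | 1 ≤ dist (f x) (g x)} := by
  have hS : MeasurableSet {x | 1 ≤ dist (f x) (g x)} :=
    measurableSet_le measurable_const (hf.dist hg)
  calc ∫⁻ x, ENNReal.ofReal ((f x - g x) ^ 2) ∂μ
      ≤ ∫⁻ x, 2 * ENNReal.ofReal (W (f x)) +
          {x | 1 ≤ dist (f x) (g x)}.indicator (fun _ => 8) x ∂μ :=
        lintegral_mono_ae <| hg1.mono fun x hx => by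
          simpa only [Set.indicator_apply, Set.mem_ofPred_eq] using
            ofReal_sq_sub_le_of_double_well hH2 (f x) hx
    _ = 2 * ∫⁻ x, ENNReal.ofReal (W (f x)) ∂μ + 8 * μ {x | 1 ≤ dist (f x) (g x)} := by
        rw [lintegral_add_right _ (measurable_const.indicator hS),
          lintegral_const_mul' _ _ ENNReal.ofNat_ne_top, lintegral_indicator_const hS]

end DoubleWell

theorem statement8_general (a b : ℝ) (W : ℝ → ℝ)
    (hWcont : Continuous W) (hWnonneg : ∀ s, 0 ≤ W s)
    (hH1 : ∀ s : ℝ, W s = 0 ↔ s = 1 ∨ s = -1)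
    (hH2 : ∀ s : ℝ, min ((s + 1) ^ 2) ((s - 1) ^ 2) ≤ W s)
    (u : ℕ → ℝ → ℝ) (v : ℝ → ℝ)
    (hu : ∀ n, Measurable (u n)) (hv : Measurable v)
    (hmeas : TendstoInMeasure (volume.restrict (Set.Ioo a b)) u atTop v)
    (hW0 : Tendsto (fun n => ∫⁻ t in Set.Ioo a b, ENNReal.ofReal (W (u n t))) atTop (𝓝 0)) :
    (∀ᵐ t ∂volume.restrict (Set.Ioo a b), v t = 1 ∨ v t = -1) ∧
    Tendsto (fun n =>
        ∫⁻ t in Set.Ioo a b, ENNReal.ofReal ((u n t - v t) ^ 2)) atTop (𝓝 0) := by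
  have hWv : ∫⁻ t in Set.Ioo a b, ENNReal.ofReal (W (v t)) = 0 :=
    nonpos_iff_eq_zero.mp <| hmeas.lintegral_comp_le_of_tendsto (fun n => (hu n).aemeasurable)
      (ENNReal.continuous_ofReal.comp hWcont) hW0
  have hv1 : ∀ᵐ t ∂volume.restrict (Set.Ioo a b), v t = 1 ∨ v t = -1 := by
    filter_upwards [(lintegral_eq_zero_iff
      (ENNReal.measurable_ofReal.comp (hWcont.measurable.comp hv))).mp hWv] with t ht
    exact (hH1 _).mp (le_antisymm (ENNReal.ofReal_eq_zero.mp ht) (hWnonneg _))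
  have hfar : Tendsto (fun n => volume.restrict (Set.Ioo a b) {t | 1 ≤ dist (u n t) (v t)})
      atTop (𝓝 0) := by
    simpa only [edist_dist, ENNReal.one_le_ofReal] using hmeas 1 one_pos
  have hbound : Tendsto (fun n => 2 * (∫⁻ t in Set.Ioo a b, ENNReal.ofReal (W (u n t))) +
      8 * volume.restrict (Set.Ioo a b) {t | 1 ≤ dist (u n t) (v t)}) atTop (𝓝 0) := by
    simpa using (ENNReal.Tendsto.const_mul hW0 (by simp)).add
      (ENNReal.Tendsto.const_mul hfar (by simp))
  exact ⟨hv1, tendsto_of_tendsto_of_tendsto_of_le_of_le tendsto_const_nhds hbound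
    (fun _ => zero_le) fun n => lintegral_ofReal_sq_sub_le_of_double_well hH2 (hu n) hv hv1⟩

/-- If `u_n → u` in measure on a bounded open interval `I` and
`∫_I W(u_n) → 0`, then `u ∈ {-1,1}` a.e. on `I` and `u_n → u` in `L²(I)`. -/
theorem statement8 (a b : ℝ) (hab : a < b) (W : ℝ → ℝ)
    (hWcont : Continuous W) (hWnonneg : ∀ s, 0 ≤ W s)
    (hH1 : ∀ s : ℝ, W s = 0 ↔ s = 1 ∨ s = -1)
    (hH2 : ∀ s : ℝ, min ((s + 1) ^ 2) ((s - 1) ^ 2) ≤ W s)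
    (u : ℕ → ℝ → ℝ) (v : ℝ → ℝ)
    (hu : ∀ n, Measurable (u n)) (hv : Measurable v)
    (hmeas : TendstoInMeasure (volume.restrict (Set.Ioo a b)) u atTop v)
    (hW0 : Tendsto (fun n => ∫⁻ t in Set.Ioo a b, ENNReal.ofReal (W (u n t))) atTop (𝓝 0)) :
    (∀ᵐ t ∂volume.restrict (Set.Ioo a b), v t = 1 ∨ v t = -1) ∧
    Tendsto (fun n =>
        ∫⁻ t in Set.Ioo a b, ENNReal.ofReal ((u n t - v t) ^ 2)) atTop (𝓝 0) :=
  statement8_general a b W hWcont hWnonneg hH1 hH2 u v hu hv hmeas hW0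
end

section
/- The function G : S^{d-1} → ℝ ∪ {±∞} defined by G(ν) := inf{ g_b(ν) : b an orthonormal basis of ℝ^d with last vector ν } is upper semicontinuous: for every ν ∈ S^{d-1} and every sequence (ν_n) ⊂ S^{d-1} with ν_n → ν, one has limsup_{n→∞} G(ν_n) ≤ G(ν). -/
open MeasureTheory Filter Topology RealInnerProductSpace

/-- The open cube of side `r` centred at the origin, with faces orthogonal to the
vectors of the orthonormal basis `b`. -/
def cubeSet (d : ℕ) (b : OrthonormalBasis (Fin d) ℝ (EuclideanSpace ℝ (Fin d)))
    (r : ℝ) : Set (EuclideanSpace ℝ (Fin d)) :=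
  { x | ∀ i : Fin d, |⟪x, b i⟫| < r / 2 }

/-- The scaled cell energy
`∫_{Q₁} [W(v)/ε + Σ_{ℓ=1}^k q_ℓ ε^{2ℓ-1} |∇^(ℓ)v|_ℓ²] dx` on the unit cube
oriented by `b`, where `|·|_ℓ = N ℓ` is a norm on symmetric `ℓ`-multilinear forms. -/
noncomputable def cellEnergy (d k : ℕ) (q : ℕ → ℝ) (W : ℝ → ℝ)
    (N : (ℓ : ℕ) → ContinuousMultilinearMap ℝ (fun _ : Fin ℓ => EuclideanSpace ℝ (Fin d)) ℝ → ℝ)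
    (b : OrthonormalBasis (Fin d) ℝ (EuclideanSpace ℝ (Fin d)))
    (ε : ℝ) (v : EuclideanSpace ℝ (Fin d) → ℝ) : ℝ :=
  ∫ x in cubeSet d b 1,
    (W (v x) / ε +
      ∑ ℓ ∈ Finset.Icc 1 k, q ℓ * ε ^ (2 * ℓ - 1) * (N ℓ (iteratedFDeriv ℝ ℓ v x)) ^ 2)

/-- The admissible class `A^ν_ε(b)`: `C^k` functions equal to `ū((x·ν)/ε)` on
`Q₁ \ Q_r` for some `r ∈ (0,1)`. -/
def AdmCl (d k : ℕ) (ubar : ℝ → ℝ)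
    (b : OrthonormalBasis (Fin d) ℝ (EuclideanSpace ℝ (Fin d)))
    (ν : EuclideanSpace ℝ (Fin d)) (ε : ℝ) (v : EuclideanSpace ℝ (Fin d) → ℝ) : Prop :=
  ContDiff ℝ (k : ℕ∞) v ∧ ∃ r : ℝ, 0 < r ∧ r < 1 ∧
    ∀ x ∈ cubeSet d b 1 \ cubeSet d b r, v x = ubar (⟪x, ν⟫ / ε)

/-- The cell-problem density `g_b(ν)` (with values in `EReal`). -/
noncomputable def gCell (d k : ℕ) (q : ℕ → ℝ) (W : ℝ → ℝ)
    (N : (ℓ : ℕ) → ContinuousMultilinearMap ℝ (fun _ : Fin ℓ => EuclideanSpace ℝ (Fin d)) ℝ → ℝ)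
    (ubar : ℝ → ℝ) (b : OrthonormalBasis (Fin d) ℝ (EuclideanSpace ℝ (Fin d)))
    (ν : EuclideanSpace ℝ (Fin d)) : EReal :=
  sInf { e : EReal | ∃ ε : ℝ, ∃ v : EuclideanSpace ℝ (Fin d) → ℝ,
    0 < ε ∧ ε < 1 ∧ AdmCl d k ubar b ν ε v ∧
    e = ((cellEnergy d k q W N b ε v : ℝ) : EReal) }


/-- The basis-independent density `G(ν) = inf { g_b(ν) : b orthonormal basis of ℝ^d
with last vector ν }` (with values in `EReal`). -/
noncomputable def GDen (d k : ℕ) (hd : 0 < d) (q : ℕ → ℝ) (W : ℝ → ℝ)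
    (N : (ℓ : ℕ) → ContinuousMultilinearMap ℝ (fun _ : Fin ℓ => EuclideanSpace ℝ (Fin d)) ℝ → ℝ)
    (ubar : ℝ → ℝ) (ν : EuclideanSpace ℝ (Fin d)) : EReal :=
  sInf { e : EReal | ∃ b : OrthonormalBasis (Fin d) ℝ (EuclideanSpace ℝ (Fin d)),
    b ⟨d - 1, Nat.sub_lt hd Nat.one_pos⟩ = ν ∧ e = gCell d k q W N ubar b ν }

/-!
Let `νₙ → ν`. The product `Rₙ` of the reflections in `ν^⊥` and in `(ν + νₙ)^⊥` is a linear
isometry with `Rₙ ν = νₙ`, and `Rₙ → id` as `νₙ → ν`. A competitor `(b, ε, v)` for `G(ν)` is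
carried by `Rₙ` to the competitor `(Rₙ b, ε, v ∘ Rₙ⁻¹)` for `G(νₙ)`. After the change of
variables `x = Rₙ y`, its energy is the energy of `v` on the cube of `b` with all derivatives
precomposed with `Rₙ⁻¹`, which depends continuously on `Rₙ⁻¹` and hence tends to the energy of
`v`. So `limsup G(νₙ)` is at most the energy of every competitor for `G(ν)`.
-/

local notation "ℝ^" n:max => EuclideanSpace ℝ (Fin n)

instance ContinuousMultilinearMap.finiteDimensional {𝕜 ι G : Type*} {E : ι → Type*}
    [NontriviallyNormedField 𝕜] [Fintype ι] [∀ i, NormedAddCommGroup (E i)]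
    [∀ i, NormedSpace 𝕜 (E i)] [∀ i, FiniteDimensional 𝕜 (E i)]
    [NormedAddCommGroup G] [NormedSpace 𝕜 G] [FiniteDimensional 𝕜 G] :
    FiniteDimensional 𝕜 (ContinuousMultilinearMap 𝕜 E G) :=
  .of_injective (ContinuousMultilinearMap.toMultilinearMapLinear (R' := 𝕜) (A := 𝕜))
    ContinuousMultilinearMap.toMultilinearMap_injective

theorem continuous_of_subadditive_of_abs_homogeneous {X : Type*} [NormedAddCommGroup X]
    [NormedSpace ℝ X] [FiniteDimensional ℝ X] {f : X → ℝ}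
    (hsmul : ∀ (c : ℝ) x, f (c • x) = |c| * f x) (hadd : ∀ x y, f (x + y) ≤ f x + f y) :
    Continuous f :=
  continuousOn_univ.mp <| (Seminorm.of f hadd hsmul).convexOn.continuousOn isOpen_univ

theorem ContinuousMultilinearMap.continuous_compContinuousLinearMap_const {𝕜 ι E F G : Type*}
    [NontriviallyNormedField 𝕜] [Fintype ι] [DecidableEq ι]
    [NormedAddCommGroup E] [NormedSpace 𝕜 E] [NormedAddCommGroup F] [NormedSpace 𝕜 F]
    [NormedAddCommGroup G] [NormedSpace 𝕜 G] :
    Continuous fun p : ContinuousMultilinearMap 𝕜 (fun _ : ι => F) G × (E →L[𝕜] F) =>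
      p.1.compContinuousLinearMap fun _ => p.2 := by
  have hjoint : Continuous fun p : ContinuousMultilinearMap 𝕜 (fun _ : ι => F) G ×
      (ι → E →L[𝕜] F) => p.1.compContinuousLinearMap p.2 :=
    continuous_iff_continuousAt.2 fun p =>
      (hasStrictFDerivAt_compContinuousLinearMap p).continuousAt
  exact hjoint.comp (continuous_fst.prodMk (continuous_pi fun _ => continuous_snd))

section Rotation

open Submodule

variable {E : Type*} [NormedAddCommGroup E] [InnerProductSpace ℝ E]

theorem coe_reflection_orthogonalComplement_singleton (u : E) :
    ((reflection (ℝ ∙ u)ᗮ : E ≃ₗᵢ[ℝ] E) : E →L[ℝ] E) =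
      ContinuousLinearMap.id ℝ E - (2 / ‖u‖ ^ 2) • (innerSL ℝ u).smulRight u := by
  ext x
  simp [reflection_orthogonal_apply, reflection_singleton_apply]
  module

theorem continuousAt_reflection_orthogonalComplement_singleton {u : E} (hu : u ≠ 0) :
    ContinuousAt (fun w : E => ((reflection (ℝ ∙ w)ᗮ : E ≃ₗᵢ[ℝ] E) : E →L[ℝ] E)) u := by
  simp only [coe_reflection_orthogonalComplement_singleton]
  have hsmulRight : Continuous fun w : E => (innerSL ℝ w).smulRight w := by fun_prop
  exact continuousAt_const.sub <|
    (continuousAt_const.div (continuous_norm.pow 2).continuousAt (by simpa)).smul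
      hsmulRight.continuousAt

/-- The single reflection in `(a - c)^⊥` also takes `a` to `c`, but it stays away from the
identity as `c → a`; composing with the reflection in `a^⊥` repairs this. -/
noncomputable def rotationTo (a c : E) : E ≃ₗᵢ[ℝ] E :=
  (reflection (ℝ ∙ a)ᗮ).trans (reflection (ℝ ∙ (a + c))ᗮ)

theorem rotationTo_apply_self {a c : E} (h : ‖a‖ = ‖c‖) : rotationTo a c a = c := by
  have hspan : (ℝ ∙ (-a - c)) = ℝ ∙ (a + c) := by
    rw [← neg_add', ← Set.neg_singleton, span_neg]
  have hc : reflection (ℝ ∙ (-a - c))ᗮ (-a) = c := reflection_sub (by rwa [norm_neg])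
  simpa [rotationTo, reflection_orthogonalComplement_singleton_eq_neg, hspan] using hc

theorem tendsto_rotationTo_symm {a : E} (ha : a ≠ 0) :
    Tendsto (fun c => ((rotationTo a c).symm : E →L[ℝ] E)) (𝓝 a)
      (𝓝 (ContinuousLinearMap.id ℝ E)) := by
  set ρ : E → E →L[ℝ] E := fun w => (reflection (ℝ ∙ w)ᗮ : E ≃ₗᵢ[ℝ] E)
  have hsymm : (fun c => ((rotationTo a c).symm : E →L[ℝ] E)) = fun c => (ρ a).comp (ρ (a + c)) :=
    funext fun c => by ext x; simp [rotationTo, ρ]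
  have hρ : ContinuousAt (fun c => ρ (a + c)) a :=
    (continuousAt_reflection_orthogonalComplement_singleton
      (by simpa [← two_smul ℝ a] using ha)).comp (by fun_prop)
  have hid : (ρ a).comp (ρ (a + a)) = ContinuousLinearMap.id ℝ E := by
    ext x
    simp [ρ, ← two_smul ℝ a, span_singleton_smul_eq (IsUnit.mk0 (2 : ℝ) two_ne_zero)]
  rw [hsymm, ← hid]
  exact ((ContinuousLinearMap.compL ℝ E E E (ρ a)).continuous.continuousAt.comp hρ).tendsto

end Rotation

section CellEnergy

variable {d k : ℕ}

theorem cubeSet_map (b : OrthonormalBasis (Fin d) ℝ (ℝ^d)) (R : ℝ^d ≃ₗᵢ[ℝ] ℝ^d) (r : ℝ) :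
    cubeSet d (b.map R) r = R.symm ⁻¹' cubeSet d b r := by
  ext x
  simp [cubeSet, LinearIsometryEquiv.inner_map_eq_flip]

theorem isOpen_cubeSet (b : OrthonormalBasis (Fin d) ℝ (ℝ^d)) (r : ℝ) :
    IsOpen (cubeSet d b r) := by
  simp only [cubeSet, Set.ofPred_forall]
  exact isOpen_iInter_of_finite fun i => isOpen_lt (by fun_prop) continuous_const

theorem cubeSet_subset_closedBall (b : OrthonormalBasis (Fin d) ℝ (ℝ^d)) (r : ℝ) :
    cubeSet d b r ⊆ Metric.closedBall 0 (d * (r / 2)) := by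
  intro x hx
  rw [mem_closedBall_zero_iff, ← b.sum_repr' x]
  calc ‖∑ i, ⟪b i, x⟫ • b i‖ ≤ ∑ i, ‖⟪b i, x⟫ • b i‖ := norm_sum_le _ _
    _ ≤ ∑ _i : Fin d, r / 2 := Finset.sum_le_sum fun i _ => by
        simpa [norm_smul, real_inner_comm] using (hx i).le
    _ = d * (r / 2) := by simp

theorem AdmCl.map {ubar : ℝ → ℝ} {b : OrthonormalBasis (Fin d) ℝ (ℝ^d)} {ν : ℝ^d} {ε : ℝ}
    {v : ℝ^d → ℝ} (h : AdmCl d k ubar b ν ε v) (R : ℝ^d ≃ₗᵢ[ℝ] ℝ^d) :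
    AdmCl d k ubar (b.map R) (R ν) ε (v ∘ R.symm) := by
  obtain ⟨hv, r, hr0, hr1, hbdry⟩ := h
  refine ⟨hv.comp (R.symm : ℝ^d →L[ℝ] ℝ^d).contDiff, r, hr0, hr1, fun x hx => ?_⟩
  rw [cubeSet_map, cubeSet_map] at hx
  simp [hbdry _ hx, LinearIsometryEquiv.inner_map_eq_flip]

variable (d k) in
noncomputable def cellEnergyPrecomp (q : ℕ → ℝ) (W : ℝ → ℝ)
    (N : (ℓ : ℕ) → ContinuousMultilinearMap ℝ (fun _ : Fin ℓ => ℝ^d) ℝ → ℝ)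
    (b : OrthonormalBasis (Fin d) ℝ (ℝ^d)) (ε : ℝ) (v : ℝ^d → ℝ) (g : ℝ^d →L[ℝ] ℝ^d) : ℝ :=
  ∫ x in cubeSet d b 1,
    (W (v x) / ε + ∑ ℓ ∈ Finset.Icc 1 k,
      q ℓ * ε ^ (2 * ℓ - 1) * N ℓ ((iteratedFDeriv ℝ ℓ v x).compContinuousLinearMap fun _ => g) ^ 2)

variable {q : ℕ → ℝ} {W : ℝ → ℝ}
  {N : (ℓ : ℕ) → ContinuousMultilinearMap ℝ (fun _ : Fin ℓ => ℝ^d) ℝ → ℝ}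
  {b : OrthonormalBasis (Fin d) ℝ (ℝ^d)} {ε : ℝ} {v : ℝ^d → ℝ}

theorem cellEnergyPrecomp_id :
    cellEnergyPrecomp d k q W N b ε v (ContinuousLinearMap.id ℝ (ℝ^d)) =
      cellEnergy d k q W N b ε v :=
  rfl

theorem cellEnergy_map (R : ℝ^d ≃ₗᵢ[ℝ] ℝ^d) :
    cellEnergy d k q W N (b.map R) ε (v ∘ R.symm) = cellEnergyPrecomp d k q W N b ε v R.symm := by
  rw [cellEnergy, ← R.measurePreserving.setIntegral_preimage_emb
    R.toHomeomorph.measurableEmbedding, cubeSet_map, ← Set.preimage_comp, R.symm_comp_self,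
    Set.preimage_id, cellEnergyPrecomp]
  refine setIntegral_congr_fun (isOpen_cubeSet b 1).measurableSet fun x _ => ?_
  have hD (ℓ : ℕ) : iteratedFDeriv ℝ ℓ (v ∘ R.symm) (R x) =
      (iteratedFDeriv ℝ ℓ v x).compContinuousLinearMap fun _ => (R.symm : ℝ^d →L[ℝ] ℝ^d) := by
    simpa [iteratedFDerivWithin_univ] using
      R.symm.toContinuousLinearEquiv.iteratedFDerivWithin_comp_right v uniqueDiffOn_univ
        (Set.mem_univ (R.symm (R x))) ℓ
  simp [hD]

theorem continuous_cellEnergyPrecomp (hW : Continuous W)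
    (hN : ∀ ℓ ∈ Finset.Icc 1 k, Continuous (N ℓ)) (hv : ContDiff ℝ (k : ℕ∞) v) :
    Continuous (cellEnergyPrecomp d k q W N b ε v) := by
  set K := Metric.closedBall (0 : ℝ^d) (d * (1 / 2))
  have hrestrict :
      (volume.restrict (cubeSet d b 1)).restrict K = volume.restrict (cubeSet d b 1) := by
    rw [Measure.restrict_restrict Metric.isClosed_closedBall.measurableSet,
      Set.inter_eq_right.2 (cubeSet_subset_closedBall b 1)]
  have hD : ∀ ℓ ∈ Finset.Icc 1 k, Continuous (iteratedFDeriv ℝ ℓ v) := fun ℓ hℓ =>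
    hv.continuous_iteratedFDeriv (by exact_mod_cast (Finset.mem_Icc.1 hℓ).2)
  have hF : Continuous (Function.uncurry fun (g : ℝ^d →L[ℝ] ℝ^d) x =>
      W (v x) / ε + ∑ ℓ ∈ Finset.Icc 1 k, q ℓ * ε ^ (2 * ℓ - 1) *
        N ℓ ((iteratedFDeriv ℝ ℓ v x).compContinuousLinearMap fun _ => g) ^ 2) :=
    ((hW.comp (hv.continuous.comp continuous_snd)).div_const ε).add <|
      continuous_finsetSum _ fun ℓ hℓ => continuous_const.mul <| ((hN ℓ hℓ).comp <|
        ContinuousMultilinearMap.continuous_compContinuousLinearMap_const.comp <|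
          ((hD ℓ hℓ).comp continuous_snd).prodMk continuous_fst).pow 2
  have hint := continuous_parametric_integral_of_continuous
    (μ := volume.restrict (cubeSet d b 1)) hF (isCompact_closedBall 0 (d * (1 / 2)))
  rwa [hrestrict] at hint

theorem GDen_map_le {ubar : ℝ → ℝ} {ν : ℝ^d} (hd : 0 < d)
    (hb : b ⟨d - 1, Nat.sub_lt hd Nat.one_pos⟩ = ν) (hε0 : 0 < ε) (hε1 : ε < 1)
    (hv : AdmCl d k ubar b ν ε v) (R : ℝ^d ≃ₗᵢ[ℝ] ℝ^d) :
    GDen d k hd q W N ubar (R ν) ≤ (cellEnergyPrecomp d k q W N b ε v R.symm : EReal) :=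
  calc GDen d k hd q W N ubar (R ν)
      ≤ gCell d k q W N ubar (b.map R) (R ν) := sInf_le ⟨_, by rw [b.map_apply, hb], rfl⟩
    _ ≤ cellEnergy d k q W N (b.map R) ε (v ∘ R.symm) :=
        sInf_le ⟨ε, _, hε0, hε1, hv.map R, rfl⟩
    _ = cellEnergyPrecomp d k q W N b ε v R.symm := by rw [cellEnergy_map]

end CellEnergy

/-- The density `G : S^{d-1} → ℝ ∪ {±∞}` is (sequentially) upper
semicontinuous: if `ν_n → ν` on the unit sphere, then `limsup_n G(ν_n) ≤ G(ν)`. -/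
theorem statement13 (d k : ℕ) (hd : 2 ≤ d) (q : ℕ → ℝ) (W : ℝ → ℝ)
    (hWcont : Continuous W)
    (N : (ℓ : ℕ) → ContinuousMultilinearMap ℝ (fun _ : Fin ℓ => EuclideanSpace ℝ (Fin d)) ℝ → ℝ)
    (hN : ∀ ℓ ∈ Finset.Icc 1 k,
      (∀ T, 0 ≤ N ℓ T) ∧ (∀ T, N ℓ T = 0 ↔ T = 0) ∧
      (∀ (c : ℝ) T, N ℓ (c • T) = |c| * N ℓ T) ∧
      (∀ T S, N ℓ (T + S) ≤ N ℓ T + N ℓ S))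
    (ubar : ℝ → ℝ)
    (ν : EuclideanSpace ℝ (Fin d)) (hν : ‖ν‖ = 1)
    (νseq : ℕ → EuclideanSpace ℝ (Fin d)) (hνseq : ∀ n, ‖νseq n‖ = 1)
    (hconv : Tendsto νseq atTop (𝓝 ν)) :
    Filter.limsup (fun n => GDen d k (by omega) q W N ubar (νseq n)) atTop ≤
      GDen d k (by omega) q W N ubar ν := by
  refine le_sInf ?_
  rintro _ ⟨b, hbν, rfl⟩
  refine le_sInf ?_
  rintro _ ⟨ε, v, hε0, hε1, hv, rfl⟩
  have hNc : ∀ ℓ ∈ Finset.Icc 1 k, Continuous (N ℓ) := fun ℓ hℓ =>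
    continuous_of_subadditive_of_abs_homogeneous (hN ℓ hℓ).2.2.1 (hN ℓ hℓ).2.2.2
  set R := fun n => rotationTo ν (νseq n)
  have hle (n : ℕ) : GDen d k (by omega) q W N ubar (νseq n) ≤
      (cellEnergyPrecomp d k q W N b ε v (R n).symm : EReal) := by
    rw [← rotationTo_apply_self (by rw [hν, hνseq n] : ‖ν‖ = ‖νseq n‖)]
    exact GDen_map_le _ hbν hε0 hε1 hv (R n)
  have hlim : Tendsto (fun n => cellEnergyPrecomp d k q W N b ε v (R n).symm) atTop
      (𝓝 (cellEnergy d k q W N b ε v)) := by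
    rw [← cellEnergyPrecomp_id]
    exact ((continuous_cellEnergyPrecomp hWcont hNc hv.1).tendsto _).comp
      ((tendsto_rotationTo_symm (norm_ne_zero_iff.1 (hν ▸ one_ne_zero))).comp hconv)
  calc limsup (fun n => GDen d k (by omega) q W N ubar (νseq n)) atTop
      ≤ limsup (fun n => (cellEnergyPrecomp d k q W N b ε v (R n).symm : EReal)) atTop :=
        limsup_le_limsup (.of_forall hle)
    _ = cellEnergy d k q W N b ε v := ((continuous_coe_real_ereal.tendsto _).comp hlim).limsup_eq
end
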